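/- arXiv:2603.13143 — 3 statements merged into one kernel-verified Lean document; each statement's English description precedes it below -/
import Mathlib

section
/- Let τ₁^(q) ∈ ℙ_int((A∩B)‾) be such that either τ₁ is W-critical or (σ₁, τ₁) ∈ W for some σ₁ with GS(σ₁) ≠ GS(τ₁). Let σ₂^(q−1) ∈ (A∩B)_Ā ∪ (A∩B)_B̄ be such that GS(τ₁) = GS(σ₂). Then there exists exactly one extended W-trajectory from τ₁ to σ₂ in which every simplex has ground simplex equal to GS(τ₁). -/
open scoped Classical

noncomputable section

namespace DMT

variable {V : Type*} {U : Type*}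

/-- An abstract simplicial complex: a nonempty collection of nonempty finite
sets of vertices that is closed under taking nonempty subsets. -/
def IsComplex (K : Set (Finset V)) : Prop :=
  K.Nonempty ∧ ∀ σ ∈ K, σ.Nonempty ∧ ∀ τ : Finset V, τ ⊆ σ → τ.Nonempty → τ ∈ K

/-- The incidence number `⟨τ, σ⟩` of `σ` with respect to `τ`, where simplices are
oriented by listing their vertices increasingly: it is `(-1)^i` if `σ` is obtained
from `τ` by deleting the `i`-th vertex, and `0` if `σ` is not a s_succ_eq_mixB_or_eq_erase of `τ`. -/
def incidence [LinearOrder V] (τ σ : Finset V) : ℤ :=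
  if σ ⊆ τ ∧ τ.card = σ.card + 1 then
    ∑ v ∈ τ \ σ, (-1 : ℤ) ^ (τ.filter fun u => u < v).card
  else 0

/-- A discrete vector field on a complex `K`: a set of pairs `(σ, τ)` of simplices of `K`
with `σ` a s_succ_eq_mixB_or_eq_erase of `τ`, such that every simplex appears in at most one pair. -/
def IsDVF (K : Set (Finset U)) (W : Set (Finset U × Finset U)) : Prop :=
  (∀ p ∈ W, p.1 ∈ K ∧ p.2 ∈ K ∧ p.1 ⊆ p.2 ∧ p.2.card = p.1.card + 1) ∧
  ∀ p ∈ W, ∀ p' ∈ W, (p.1 = p'.1 ∨ p.1 = p'.2 ∨ p.2 = p'.1 ∨ p.2 = p'.2) → p = p'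

/-- A simplex is critical for `W` if it appears in no pair of `W`. -/
def IsCritical (W : Set (Finset U × Finset U)) (σ : Finset U) : Prop :=
  ∀ p ∈ W, p.1 ≠ σ ∧ p.2 ≠ σ

/-- The set of `q`-dimensional `W`-critical simplices of `K`. -/
def critSet (K : Set (Finset U)) (W : Set (Finset U × Finset U)) (q : ℕ) : Set (Finset U) :=
  {σ | σ ∈ K ∧ σ.card = q + 1 ∧ IsCritical W σ}

/-- A `W`-trajectory `τ₀, σ₁, τ₁, …, σ_k, τ_k`. -/
structure Traj (W : Set (Finset U × Finset U)) where
  k : ℕ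
  t : ℕ → Finset U
  s : ℕ → Finset U
  dim_t : ∀ i ≤ k, (t i).card = (t 0).card
  dim_s : ∀ i, 1 ≤ i → i ≤ k → (s i).card + 1 = (t 0).card
  mem : ∀ i, 1 ≤ i → i ≤ k → (s i, t i) ∈ W
  sub : ∀ i, 1 ≤ i → i ≤ k → s i ⊆ t (i - 1)
  nmem : ∀ i, 1 ≤ i → i ≤ k → (s i, t (i - 1)) ∉ W

/-- `W` is acyclic: there is no nontrivial closed `W`-trajectory. -/
def IsAcyclic (W : Set (Finset U × Finset U)) : Prop :=
  ¬ ∃ P : Traj W, 1 < P.k ∧ P.t 0 = P.t P.k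

/-- A gradient vector field on `K`: an acyclic discrete vector field. -/
def IsGVF (K : Set (Finset U)) (W : Set (Finset U × Finset U)) : Prop :=
  IsDVF K W ∧ IsAcyclic W

/-- An extended `W`-trajectory `τ₀, σ₁, τ₁, …, σ_k, τ_k, σ_{k+1}`, with
`(σᵢ, τᵢ) ∈ W` for `1 ≤ i ≤ k`, and `σᵢ ⊆ τ_{i-1}`, `(σᵢ, τ_{i-1}) ∉ W` for
`1 ≤ i ≤ k + 1`.  (The values of `t` and `s` outside the relevant ranges are
normalized to `∅`.) -/
structure ExtTraj (W : Set (Finset U × Finset U)) where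
  k : ℕ
  t : ℕ → Finset U
  s : ℕ → Finset U
  dim_t : ∀ i ≤ k, (t i).card = (t 0).card
  dim_s : ∀ i, 1 ≤ i → i ≤ k + 1 → (s i).card + 1 = (t 0).card
  mem : ∀ i, 1 ≤ i → i ≤ k → (s i, t i) ∈ W
  sub : ∀ i, 1 ≤ i → i ≤ k + 1 → s i ⊆ t (i - 1)
  nmem : ∀ i, 1 ≤ i → i ≤ k + 1 → (s i, t (i - 1)) ∉ W
  pad_t : ∀ i, k < i → t i = ∅
  pad_s : ∀ i, i = 0 ∨ k + 1 < i → s i = ∅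

/-- The weight of an extended trajectory. -/
def ExtTraj.weight [LinearOrder U] {W : Set (Finset U × Finset U)} (P : ExtTraj W) : ℤ :=
  (∏ i ∈ Finset.range P.k,
      -(incidence (P.t i) (P.s (i + 1)) * incidence (P.t (i + 1)) (P.s (i + 1)))) *
    incidence (P.t P.k) (P.s (P.k + 1))

/-- `Γ(τ, σ)`: the extended `W`-trajectories with initial simplex `τ` and terminal
simplex `σ`. -/
def Gamma (W : Set (Finset U × Finset U)) (τ σ : Finset U) : Set (ExtTraj W) :=
  {P | P.t 0 = τ ∧ P.s (P.k + 1) = σ}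

/-- The Thom–Smale boundary coefficient `Σ_{P ∈ Γ(τ,σ)} w(P)`. -/
def tsCoeff [LinearOrder U] (W : Set (Finset U × Finset U)) (τ σ : Finset U) : ℤ :=
  ∑ᶠ P ∈ Gamma W τ σ, ExtTraj.weight P

/-- The copy of a complex under a vertex map. -/
def copy [DecidableEq U] (f : V → U) (K : Set (Finset V)) : Set (Finset U) :=
  {σ | ∃ γ ∈ K, σ = γ.image f}

/-- Pull a simplex of a copy back to the original vertex set. -/
def pull [Fintype V] [DecidableEq U] (f : V → U) (σ : Finset U) : Finset V :=
  Finset.univ.filter fun v => f v ∈ σ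

/-- The ground simplex of a simplex of the prism (with `a`-vertices and `b`-vertices). -/
def GS [Fintype V] [DecidableEq U] (a b : V → U) (σ : Finset U) : Finset V :=
  Finset.univ.filter fun v => a v ∈ σ ∨ b v ∈ σ

/-- The simplex `{a_{i₀}, …, a_{i_r}, b_{i_r}, …, b_{i_q}}` of the prism over
`γ = {v_{i₀} < … < v_{i_q}}`, with pivot `v = v_{i_r}`. -/
def mixA [LinearOrder V] [DecidableEq U] (a b : V → U) (γ : Finset V) (v : V) : Finset U :=
  (γ.filter fun u => u ≤ v).image a ∪ (γ.filter fun u => v ≤ u).image b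

/-- The simplex `{a_{i₀}, …, a_{i_{r-1}}, b_{i_r}, …, b_{i_q}}` of the prism over
`γ`, with pivot `v = v_{i_r}`. -/
def mixB [LinearOrder V] [DecidableEq U] (a b : V → U) (γ : Finset V) (v : V) : Finset U :=
  (γ.filter fun u => u < v).image a ∪ (γ.filter fun u => v ≤ u).image b

/-- `A_γ`. -/
def AsetOf [LinearOrder V] [DecidableEq U] (a b : V → U) (γ : Finset V) : Set (Finset U) :=
  {σ | ∃ v ∈ γ, σ = mixA a b γ v}

/-- `B_γ`. -/
def BsetOf [LinearOrder V] [DecidableEq U] (a b : V → U) (γ : Finset V) : Set (Finset U) :=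
  {σ | ∃ v ∈ γ, σ = mixB a b γ v} ∪ {γ.image a}

/-- `S_γ = A_γ ∪ B_γ`. -/
def SsetOf [LinearOrder V] [DecidableEq U] (a b : V → U) (γ : Finset V) : Set (Finset U) :=
  AsetOf a b γ ∪ BsetOf a b γ

/-- The prism `ℙ(C)` over the complex `C`, realized with `a`-vertices and `b`-vertices. -/
def prism [LinearOrder V] [DecidableEq U] (a b : V → U) (C : Set (Finset V)) :
    Set (Finset U) :=
  ⋃ γ ∈ C, SsetOf a b γ

/-- The interior simplices of the prism. -/
def prismInt [LinearOrder V] [DecidableEq U] (a b : V → U) (C : Set (Finset V)) :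
    Set (Finset U) :=
  prism a b C \ (copy a C ∪ copy b C)

/-- The complex `X̃ = Ā ∪ ℙ((A ∩ B)‾) ∪ B̄`. -/
def tilde [LinearOrder V] [DecidableEq U] (a b : V → U) (A B : Set (Finset V)) :
    Set (Finset U) :=
  copy a A ∪ prism a b (A ∩ B) ∪ copy b B

/-- The prism pairing `𝒱`: for each `γ ∈ C` and `v ∈ γ`, the pair
`([a_{i₀},…,a_{i_{r-1}}, b_{i_r},…,b_{i_q}], [a_{i₀},…,a_{i_r}, b_{i_r},…,b_{i_q}])`. -/
def prismVF [LinearOrder V] [DecidableEq U] (a b : V → U) (C : Set (Finset V)) :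
    Set (Finset U × Finset U) :=
  {p | ∃ γ ∈ C, ∃ v ∈ γ, p = (mixB a b γ v, mixA a b γ v)}

/-- `v` is the minimum vertex of `γ`. -/
def isMin [Preorder V] (γ : Finset V) (v : V) : Prop :=
  v ∈ γ ∧ ∀ u ∈ γ, v ≤ u

/-- The pairing `W'` of the interior simplices of the prism, induced by the gradient
vector field `WC` on the copy (under `c`) of the intersection complex `C`. -/
def WprimeSet [Fintype V] [LinearOrder V] [DecidableEq U] (a b c : V → U)
    (C : Set (Finset V)) (WC : Set (Finset U × Finset U)) : Set (Finset U × Finset U) :=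
  {p | ∃ pr ∈ WC, ∃ v, isMin (pull c pr.1) v ∧
      p = (mixA a b (pull c pr.1) v, mixA a b (pull c pr.2) v)} ∪
  {p | ∃ pr ∈ WC, ∃ v vm am, isMin (pull c pr.2) vm ∧ isMin (pull c pr.1) am ∧
      v ∈ pull c pr.2 ∧ v ≠ vm ∧
      p = (mixB a b (pull c pr.2) v, mixA a b (pull c pr.2) (if v = am then vm else v))} ∪
  {p | ∃ pr ∈ WC, ∃ v am, isMin (pull c pr.1) am ∧ v ∈ pull c pr.1 ∧ v ≠ am ∧
      p = (mixB a b (pull c pr.1) v, mixA a b (pull c pr.1) v)} ∪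
  {p | ∃ γ : Finset V, γ ∈ C ∧ IsCritical WC (γ.image c) ∧
      ∃ v vm, isMin γ vm ∧ v ∈ γ ∧ v ≠ vm ∧ p = (mixB a b γ v, mixA a b γ v)}

/-- The discrete vector field `W = W_Ā ∪ W_B̄ ∪ W'` on `X̃`. -/
def Wfield [Fintype V] [LinearOrder V] [DecidableEq U] (a b c : V → U)
    (C : Set (Finset V)) (WA WB WC : Set (Finset U × Finset U)) :
    Set (Finset U × Finset U) :=
  WA ∪ WB ∪ WprimeSet a b c C WC

/-- Transfer a simplex of the copy under `c` to the corresponding simplex of the copy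
under `f`. -/
def transferMap [Fintype V] [DecidableEq U] (c f : V → U) (σ : Finset U) : Finset U :=
  (pull c σ).image f

/-- A mixed (Mayer–Vietoris) trajectory: a descending extended trajectory
`τ₀, σ₁, τ₁, …, σ_p, τ_p` for `WC` in the copy of the intersection, transferred by
`tr` into another copy, followed by an ascending path
`τ'_p, α_p, τ'_{p+1}, …, α_{p+l-1}, τ'_{p+l}` for `WD`. -/
structure MixTraj (WC WD : Set (Finset U × Finset U)) (tr : Finset U → Finset U) where
  p : ℕ
  l : ℕ
  t : ℕ → Finset U
  s : ℕ → Finset U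
  t' : ℕ → Finset U
  a' : ℕ → Finset U
  dim_t : ∀ i ≤ p, (t i).card = (t 0).card
  dim_s : ∀ i, 1 ≤ i → i ≤ p → (s i).card + 1 = (t 0).card
  dim_t' : ∀ i, p ≤ i → i ≤ p + l → (t' i).card = (t 0).card
  dim_a' : ∀ i, p ≤ i → i < p + l → (a' i).card = (t 0).card + 1
  mem_s : ∀ i, 1 ≤ i → i ≤ p → (s i, t i) ∈ WC
  sub_s : ∀ i, 1 ≤ i → i ≤ p → s i ⊆ t (i - 1)
  nmem_s : ∀ i, 1 ≤ i → i ≤ p → (s i, t (i - 1)) ∉ WC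
  link : t' p = tr (t p)
  mem_a : ∀ i, p ≤ i → i < p + l → (t' i, a' i) ∈ WD
  sub_a : ∀ i, p + 1 ≤ i → i ≤ p + l → t' i ⊆ a' (i - 1)
  nmem_a : ∀ i, p + 1 ≤ i → i ≤ p + l → (t' i, a' (i - 1)) ∉ WD
  pad_t : ∀ i, p < i → t i = ∅
  pad_s : ∀ i, i = 0 ∨ p < i → s i = ∅
  pad_t' : ∀ i, i < p ∨ p + l < i → t' i = ∅
  pad_a' : ∀ i, i < p ∨ p + l ≤ i → a' i = ∅

/-- The product of incidence signs along a mixed trajectory (without the leading sign). -/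
def MixTraj.wcore [LinearOrder U] {WC WD : Set (Finset U × Finset U)}
    {tr : Finset U → Finset U} (P : MixTraj WC WD tr) : ℤ :=
  (∏ i ∈ Finset.range P.p,
      -(incidence (P.t i) (P.s (i + 1)) * incidence (P.t (i + 1)) (P.s (i + 1)))) *
  ∏ i ∈ Finset.range P.l,
      -(incidence (P.a' (P.p + i)) (P.t' (P.p + i)) *
        incidence (P.a' (P.p + i)) (P.t' (P.p + i + 1)))

/-- A Mayer–Vietoris trajectory: one of the five kinds. -/
inductive MVTraj (WA WB WC : Set (Finset U × Finset U)) (trA trB : Finset U → Finset U)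
  | viaA : ExtTraj WA → MVTraj WA WB WC trA trB
  | viaB : ExtTraj WB → MVTraj WA WB WC trA trB
  | viaC : ExtTraj WC → MVTraj WA WB WC trA trB
  | crossA : MixTraj WC WA trA → MVTraj WA WB WC trA trB
  | crossB : MixTraj WC WB trB → MVTraj WA WB WC trA trB

/-- The weight `w_M` of a Mayer–Vietoris trajectory. -/
def MVTraj.wM [LinearOrder U] {WA WB WC : Set (Finset U × Finset U)}
    {trA trB : Finset U → Finset U} : MVTraj WA WB WC trA trB → ℤ
  | .viaA P => P.weight
  | .viaB P => P.weight
  | .viaC P => -P.weight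
  | .crossA P => -P.wcore
  | .crossB P => P.wcore

/-- A Mayer–Vietoris trajectory goes from `β` to `α` (with the required criticality of
the endpoints in the respective copies `Abar`, `Bbar`, `Cbar`). -/
def MVTraj.ends {WA WB WC : Set (Finset U × Finset U)} {trA trB : Finset U → Finset U}
    (Abar Bbar Cbar : Set (Finset U)) :
    MVTraj WA WB WC trA trB → Finset U → Finset U → Prop
  | .viaA T, β, α => T.t 0 = β ∧ T.s (T.k + 1) = α ∧
      β ∈ Abar ∧ IsCritical WA β ∧ α ∈ Abar ∧ IsCritical WA α
  | .viaB T, β, α => T.t 0 = β ∧ T.s (T.k + 1) = α ∧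
      β ∈ Bbar ∧ IsCritical WB β ∧ α ∈ Bbar ∧ IsCritical WB α
  | .viaC T, β, α => T.t 0 = β ∧ T.s (T.k + 1) = α ∧
      β ∈ Cbar ∧ IsCritical WC β ∧ α ∈ Cbar ∧ IsCritical WC α
  | .crossA T, β, α => T.t 0 = β ∧ T.t' (T.p + T.l) = α ∧
      β ∈ Cbar ∧ IsCritical WC β ∧ α ∈ Abar ∧ IsCritical WA α
  | .crossB T, β, α => T.t 0 = β ∧ T.t' (T.p + T.l) = α ∧
      β ∈ Cbar ∧ IsCritical WC β ∧ α ∈ Bbar ∧ IsCritical WB α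

/-- `MV(β, α)`: the set of Mayer–Vietoris trajectories from `β` to `α`. -/
def MVset (WA WB WC : Set (Finset U × Finset U)) (trA trB : Finset U → Finset U)
    (Abar Bbar Cbar : Set (Finset U)) (β α : Finset U) :
    Set (MVTraj WA WB WC trA trB) :=
  {P | MVTraj.ends Abar Bbar Cbar P β α}

/-- The Mayer–Vietoris boundary coefficient `Σ_{P ∈ MV(β,α)} w_M(P)`. -/
def mvCoeff [LinearOrder U] (WA WB WC : Set (Finset U × Finset U))
    (trA trB : Finset U → Finset U) (Abar Bbar Cbar : Set (Finset U))
    (β α : Finset U) : ℤ :=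
  ∑ᶠ P ∈ MVset WA WB WC trA trB Abar Bbar Cbar β α, MVTraj.wM P

/-- The generating sets `D_q(X)`. -/
def Dset (Abar Bbar Cbar : Set (Finset U)) (WA WB WC : Set (Finset U × Finset U)) :
    ℕ → Set (Finset U)
  | 0 => critSet Abar WA 0 ∪ critSet Bbar WB 0
  | (q + 1) => critSet Abar WA (q + 1) ∪ critSet Bbar WB (q + 1) ∪ critSet Cbar WC q

/-- The `q`-dimensional simplices of a complex. -/
def simpSet (K : Set (Finset V)) (q : ℕ) : Set (Finset V) :=
  {σ | σ ∈ K ∧ σ.card = q + 1}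

/-- The boundary homomorphism of a chain complex of free abelian groups, determined by a
matrix of coefficients. -/
def chainBoundary {ι κ : Type*} (coeff : ι → κ → ℤ) : (ι →₀ ℤ) →ₗ[ℤ] (κ →₀ ℤ) :=
  Finsupp.lsum ℤ fun i =>
    LinearMap.toSpanSingleton ℤ (κ →₀ ℤ) (∑ᶠ j : κ, coeff i j • Finsupp.single j 1)

/-- The family of boundary maps of the chain complex of free abelian groups with
generating sets `S q` and boundary coefficients `coeff` (with the convention that the
boundary in degree `0` is the zero map). -/
def fullBoundary {W : Type*} (S : ℕ → Set (Finset W)) (coeff : Finset W → Finset W → ℤ) :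
    ∀ q : ℕ, ((S q : Set (Finset W)) →₀ ℤ) →+ ((S (q - 1) : Set (Finset W)) →₀ ℤ)
  | 0 => 0
  | (q + 1) => (chainBoundary fun (i : (S (q + 1) : Set (Finset W))) (j : (S q : Set (Finset W))) =>
      coeff (i : Finset W) (j : Finset W)).toAddMonoidHom

/-- `ker d ⧸ im d'`. -/
abbrev homologyAt {L M N : Type*} [AddCommGroup L] [AddCommGroup M] [AddCommGroup N]
    (d : M →+ N) (d' : L →+ M) : Type _ :=
  (↥d.ker) ⧸ (AddSubgroup.comap d.ker.subtype d'.range)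

/-- The `q`-th homology group of the chain complex of free abelian groups with
generating sets `S` and boundary coefficients `coeff`. -/
abbrev homologyOf {W : Type*} (S : ℕ → Set (Finset W)) (coeff : Finset W → Finset W → ℤ)
    (q : ℕ) : Type _ :=
  homologyAt (fullBoundary S coeff q) (fullBoundary S coeff (q + 1))

/-- The map `f` from critical simplices of `X̃` to generators of the Mayer–Vietoris
complex: the identity on critical simplices of `Ā` and `B̄`, and the (copy in
`(A ∩ B)‾` of the) ground simplex on interior critical simplices of the prism. -/
def fmap [Fintype V] [LinearOrder V] [DecidableEq U] (a b c : V → U)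
    (C : Set (Finset V)) (τ : Finset U) : Finset U :=
  if τ ∈ prismInt a b C then (GS a b τ).image c else τ

/-- The simplex `[a_{i₀}, b_{i₀}, …, b_{i_{q-1}}]` of the prism over `γ`. -/
def aMinCopy [Fintype V] [LinearOrder V] [DecidableEq U] (a b : V → U) (γ : Finset V) :
    Finset U :=
  (γ.filter fun u => ∀ w ∈ γ, u ≤ w).image a ∪ γ.image b

/-- The map `g` from generators of the Mayer–Vietoris complex to critical simplices of
`X̃`: the identity on critical simplices of `Ā` and `B̄`, and
`[c_{i₀},…,c_{i_{q-1}}] ↦ [a_{i₀}, b_{i₀}, …, b_{i_{q-1}}]` on critical simplices of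
`(A ∩ B)‾`. -/
def gmap [Fintype V] [LinearOrder V] [DecidableEq U] (a b c : V → U)
    (Cbar : Set (Finset U)) (α : Finset U) : Finset U :=
  if α ∈ Cbar then aMinCopy a b (pull c α) else α

/-!
Over a ground simplex `γ = {v₀ < v₁ < … < v_q}` of `A ∩ B` the prism block consists of the cells
`mixA γ v`, the cells `mixB γ v` and the two copies `γ.image a` and `γ.image b = mixB γ v₀`.
The field `W` pairs `mixB γ u` with `mixA γ u` for every `u ≠ v₀`, except that when `γ` is the
coface of a pair `(δ, γ)` of `W_C` with `v₀ ∉ δ`, it pairs `mixB γ v₁` with `mixA γ v₀` instead;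
the two copies are paired out of the block. The hypothesis on `τ₁ = mixA γ v` says that no
`mixB`-cell is paired with it, that is `v = v₀` in the first case and `v = v₁` in the second.

A trajectory over `γ` leaving `mixA γ w` passes to one of its two facets over `γ`: `mixB γ w`, or
`mixA γ w ∖ {b w}`, which is `mixB γ w⁺` for the successor `w⁺` of `w` in `γ` (or `γ.image a` if
`w` is the top vertex). It then moves to the partner of that facet, which is forced. Hence the
only trajectory ending at `γ.image a` climbs `v, v⁺, v⁺⁺, …` up to the top vertex of `γ`, and the
only one ending at `γ.image b` is either the trajectory of length `0` (when `v = v₀`) or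
`mixA γ v₁, mixB γ v₁, mixA γ v₀, γ.image b`.
-/

structure IsPrismLabelling (a b : V → U) : Prop where
  injective_a : Function.Injective a
  injective_b : Function.Injective b
  ne : ∀ u v, a u ≠ b v

theorem IsPrismLabelling.ne' {a b : V → U} (h : IsPrismLabelling a b) (u v : V) : b u ≠ a v :=
  (h.ne v u).symm

section Successors

variable [LinearOrder V] {γ : Finset V} {v w : V}

/-- The successor of `w` in `γ`, or `w` itself if `w` is not below any element of `γ`. -/
def nextAbove (γ : Finset V) (w : V) : V :=
  if h : (γ.filter (w < ·)).Nonempty then (γ.filter (w < ·)).min' h else w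

theorem nextAbove_spec (h : ∃ x ∈ γ, w < x) :
    nextAbove γ w ∈ γ ∧ w < nextAbove γ w ∧ ∀ x ∈ γ, w < x → nextAbove γ w ≤ x := by
  have hne : (γ.filter (w < ·)).Nonempty := by simpa [Finset.filter_nonempty_iff] using h
  have hmem := Finset.min'_mem _ hne
  rw [Finset.mem_filter] at hmem
  rw [nextAbove, dif_pos hne]
  exact ⟨hmem.1, hmem.2, fun x hx hwx => Finset.min'_le _ x (Finset.mem_filter.2 ⟨hx, hwx⟩)⟩

theorem nextAbove_le (h : ∃ x ∈ γ, w < x) {x : V} (hx : x ∈ γ) (hwx : w < x) :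
    nextAbove γ w ≤ x :=
  (nextAbove_spec h).2.2 x hx hwx

theorem nextAbove_mem (hw : w ∈ γ) : nextAbove γ w ∈ γ := by
  by_cases h : ∃ x ∈ γ, w < x
  · exact (nextAbove_spec h).1
  · rwa [nextAbove, dif_neg (by simpa [Finset.filter_nonempty_iff] using h)]

theorem le_nextAbove : w ≤ nextAbove γ w := by
  by_cases h : ∃ x ∈ γ, w < x
  · exact (nextAbove_spec h).2.1.le
  · rw [nextAbove, dif_neg (by simpa [Finset.filter_nonempty_iff] using h)]

theorem card_filter_nextAbove (h : ∃ x ∈ γ, w < x) :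
    (γ.filter (nextAbove γ w < ·)).card + 1 = (γ.filter (w < ·)).card := by
  obtain ⟨hmem, hlt, hle⟩ := nextAbove_spec h
  have e : γ.filter (nextAbove γ w < ·) = (γ.filter (w < ·)).erase (nextAbove γ w) := by
    ext x
    simp only [Finset.mem_filter, Finset.mem_erase]
    exact ⟨fun ⟨hx, hnx⟩ => ⟨hnx.ne', hx, hlt.trans hnx⟩,
      fun ⟨hne, hx, hwx⟩ => ⟨hx, (hle x hx hwx).lt_of_ne' hne⟩⟩
  rw [e, Finset.card_erase_add_one (Finset.mem_filter.2 ⟨hmem, hlt⟩)]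

theorem iterate_nextAbove_mem (hv : v ∈ γ) (i : ℕ) : (nextAbove γ)^[i] v ∈ γ := by
  induction i with
  | zero => exact hv
  | succ i ih => rw [Function.iterate_succ_apply']; exact nextAbove_mem ih

theorem monotone_iterate_nextAbove : Monotone fun i => (nextAbove γ)^[i] v :=
  monotone_nat_of_le_succ fun i => by
    simp only [Function.iterate_succ_apply']
    exact le_nextAbove

theorem card_filter_iterate_nextAbove {i : ℕ} (hi : i ≤ (γ.filter (v < ·)).card) :
    (γ.filter ((nextAbove γ)^[i] v < ·)).card = (γ.filter (v < ·)).card - i := by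
  induction i with
  | zero => rfl
  | succ i ih =>
    have hex : ∃ x ∈ γ, (nextAbove γ)^[i] v < x := by
      simpa [← Finset.filter_nonempty_iff, ← Finset.card_pos, ih (by omega)] using by omega
    have := card_filter_nextAbove hex
    rw [Function.iterate_succ_apply']
    omega

theorem exists_gt_iterate_nextAbove {i : ℕ} (hi : i < (γ.filter (v < ·)).card) :
    ∃ x ∈ γ, (nextAbove γ)^[i] v < x := by
  have := card_filter_iterate_nextAbove hi.le
  simpa [← Finset.filter_nonempty_iff, ← Finset.card_pos, this] using by omega

theorem le_iterate_nextAbove_card {x : V} (hx : x ∈ γ) :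
    x ≤ (nextAbove γ)^[(γ.filter (v < ·)).card] v := by
  have := card_filter_iterate_nextAbove (γ := γ) (v := v) le_rfl
  rw [Nat.sub_self, Finset.card_eq_zero, Finset.filter_eq_empty_iff] at this
  exact not_lt.1 (this hx)

theorem lt_iterate_nextAbove {i : ℕ} (h₁ : 1 ≤ i) (h₂ : i ≤ (γ.filter (v < ·)).card) :
    v < (nextAbove γ)^[i] v :=
  ((nextAbove_spec (exists_gt_iterate_nextAbove (i := 0) (by omega))).2.1).trans_le
    (monotone_iterate_nextAbove h₁)

theorem iterate_nextAbove_lt_succ {i : ℕ} (hi : i < (γ.filter (v < ·)).card) :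
    (nextAbove γ)^[i] v < (nextAbove γ)^[i + 1] v := by
  rw [Function.iterate_succ_apply']
  exact (nextAbove_spec (exists_gt_iterate_nextAbove hi)).2.1

end Successors

section PrismCells

variable [DecidableEq U] {a b : V → U} {γ δ : Finset V} {u v w vm : V}

theorem a_notMem_image_b (h : IsPrismLabelling a b) : a u ∉ γ.image b := by
  simpa using fun x _ => h.ne' x u

theorem b_notMem_image_a (h : IsPrismLabelling a b) : b u ∉ γ.image a := by
  simpa using fun x _ => h.ne x u

theorem notMem_copy_a (h : IsPrismLabelling a b) {K : Set (Finset V)} {σ : Finset U} {x : V}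
    (hσ : b x ∈ σ) : σ ∉ copy a K := by
  rintro ⟨δ, -, rfl⟩
  exact b_notMem_image_a h hσ

theorem notMem_copy_b (h : IsPrismLabelling a b) {K : Set (Finset V)} {σ : Finset U} {x : V}
    (hσ : a x ∈ σ) : σ ∉ copy b K := by
  rintro ⟨δ, -, rfl⟩
  exact a_notMem_image_b h hσ

theorem mem_GS [Fintype V] {σ : Finset U} : u ∈ GS a b σ ↔ a u ∈ σ ∨ b u ∈ σ := by
  simp [GS]

theorem GS_image_a [Fintype V] (h : IsPrismLabelling a b) : GS a b (γ.image a) = γ := by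
  ext u
  simp [mem_GS, h.injective_a.eq_iff, b_notMem_image_a h]

theorem GS_image_b [Fintype V] (h : IsPrismLabelling a b) : GS a b (γ.image b) = γ := by
  ext u
  simp [mem_GS, h.injective_b.eq_iff, a_notMem_image_b h]

variable [LinearOrder V]

theorem a_mem_mixA (h : IsPrismLabelling a b) : a u ∈ mixA a b γ w ↔ u ∈ γ ∧ u ≤ w := by
  simp [mixA, h.injective_a.eq_iff, h.ne']

theorem b_mem_mixA (h : IsPrismLabelling a b) : b u ∈ mixA a b γ w ↔ u ∈ γ ∧ w ≤ u := by
  simp [mixA, h.injective_b.eq_iff, h.ne]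

theorem a_mem_mixB (h : IsPrismLabelling a b) : a u ∈ mixB a b γ w ↔ u ∈ γ ∧ u < w := by
  simp [mixB, h.injective_a.eq_iff, h.ne']

theorem b_mem_mixB (h : IsPrismLabelling a b) : b u ∈ mixB a b γ w ↔ u ∈ γ ∧ w ≤ u := by
  simp [mixB, h.injective_b.eq_iff, h.ne]

theorem isMin.eq {x y : V} (hx : isMin γ x) (hy : isMin γ y) : x = y :=
  (hx.2 y hy.1).antisymm (hy.2 x hx.1)

theorem isMin_min' (hne : γ.Nonempty) : isMin γ (γ.min' hne) :=
  ⟨γ.min'_mem hne, fun x hx => γ.min'_le x hx⟩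

theorem mixB_eq_image_b_of_isMin {m : V} (hm : isMin γ m) : mixB a b γ m = γ.image b := by
  have h₁ : γ.filter (· < m) = ∅ := Finset.filter_false_of_mem fun x hx => not_lt.2 (hm.2 x hx)
  have h₂ : γ.filter (m ≤ ·) = γ := Finset.filter_true_of_mem hm.2
  simp [mixB, h₁, h₂]

theorem a_mem_mixB_and_b_mem_mixB (h : IsPrismLabelling a b) (hvm : isMin γ vm) (hu : u ∈ γ)
    (hne : u ≠ vm) : a vm ∈ mixB a b γ u ∧ b u ∈ mixB a b γ u :=
  ⟨(a_mem_mixB h).2 ⟨hvm.1, (hvm.2 u hu).lt_of_ne hne.symm⟩, (b_mem_mixB h).2 ⟨hu, le_rfl⟩⟩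

theorem mixA_erase_a (h : IsPrismLabelling a b) : (mixA a b γ w).erase (a w) = mixB a b γ w := by
  ext x
  simp only [mixA, mixB, Finset.mem_erase, Finset.mem_union, Finset.mem_image,
    Finset.mem_filter]
  grind [h.injective_a.eq_iff, h.ne']

theorem mixB_subset_mixA (h : IsPrismLabelling a b) : mixB a b γ w ⊆ mixA a b γ w :=
  mixA_erase_a h ▸ Finset.erase_subset _ _

theorem mixA_erase_b_of_exists (h : IsPrismLabelling a b) (hw : ∃ x ∈ γ, w < x) :
    (mixA a b γ w).erase (b w) = mixB a b γ (nextAbove γ w) := by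
  obtain ⟨-, hlt, hle⟩ := nextAbove_spec hw
  ext x
  simp only [mixA, mixB, Finset.mem_erase, Finset.mem_union, Finset.mem_image,
    Finset.mem_filter]
  grind [h.injective_b.eq_iff, h.ne]

theorem mixA_erase_b_of_forall (h : IsPrismLabelling a b) (hw : ∀ x ∈ γ, x ≤ w) :
    (mixA a b γ w).erase (b w) = γ.image a := by
  ext x
  simp only [mixA, Finset.mem_erase, Finset.mem_union, Finset.mem_image, Finset.mem_filter]
  grind [h.injective_b.eq_iff, h.ne]

theorem mixA_iterate_erase_b (h : IsPrismLabelling a b) {j : ℕ}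
    (hj : j < (γ.filter (v < ·)).card) :
    (mixA a b γ ((nextAbove γ)^[j] v)).erase (b ((nextAbove γ)^[j] v)) =
      mixB a b γ ((nextAbove γ)^[j + 1] v) := by
  rw [mixA_erase_b_of_exists h (exists_gt_iterate_nextAbove hj), Function.iterate_succ_apply']

theorem mixA_iterate_card_erase_b (h : IsPrismLabelling a b) :
    (mixA a b γ ((nextAbove γ)^[(γ.filter (v < ·)).card] v)).erase
      (b ((nextAbove γ)^[(γ.filter (v < ·)).card] v)) = γ.image a :=
  mixA_erase_b_of_forall h fun _ => le_iterate_nextAbove_card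

theorem card_mixB (h : IsPrismLabelling a b) : (mixB a b γ w).card = γ.card := by
  rw [mixB, Finset.card_union_of_disjoint, Finset.card_image_of_injective _ h.injective_a,
    Finset.card_image_of_injective _ h.injective_b]
  · simpa using Finset.card_filter_add_card_filter_not (s := γ) (· < w)
  · simp only [Finset.disjoint_left, Finset.mem_image]
    rintro _ ⟨u, -, rfl⟩ ⟨v, -, e⟩
    exact h.ne u v e.symm

theorem card_mixA (h : IsPrismLabelling a b) (hw : w ∈ γ) :
    (mixA a b γ w).card = γ.card + 1 := by
  have ha : a w ∈ mixA a b γ w := (a_mem_mixA h).2 ⟨hw, le_rfl⟩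
  rw [← Finset.card_erase_add_one ha, mixA_erase_a h, card_mixB h]

theorem card_mixA_erase_b (h : IsPrismLabelling a b) (hw : w ∈ γ) :
    ((mixA a b γ w).erase (b w)).card = γ.card := by
  rw [Finset.card_erase_of_mem ((b_mem_mixA h).2 ⟨hw, le_rfl⟩), card_mixA h hw, Nat.add_sub_cancel]

theorem mixB_ne_image_a (h : IsPrismLabelling a b) (hw : w ∈ γ) : mixB a b γ w ≠ δ.image a :=
  fun e => b_notMem_image_a h (e ▸ (b_mem_mixB h).2 ⟨hw, le_rfl⟩)

theorem mixB_ne_image_b (h : IsPrismLabelling a b) (hu : u ∈ γ) (huw : u < w) :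
    mixB a b γ w ≠ δ.image b :=
  fun e => a_notMem_image_b h (e ▸ (a_mem_mixB h).2 ⟨hu, huw⟩)

theorem mixA_ne_mixB (h : IsPrismLabelling a b) (hv : v ∈ γ) : mixA a b γ v ≠ mixB a b δ w := by
  intro e
  have hav := (a_mem_mixB h).1 (e ▸ (a_mem_mixA h).2 ⟨hv, le_rfl⟩)
  have hbv := (b_mem_mixB h).1 (e ▸ (b_mem_mixA h).2 ⟨hv, le_rfl⟩)
  exact hav.2.not_ge hbv.2

variable [Fintype V]

theorem GS_mixA (h : IsPrismLabelling a b) : GS a b (mixA a b γ w) = γ := by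
  ext u
  simp only [mem_GS, a_mem_mixA h, b_mem_mixA h]
  grind

theorem GS_mixB (h : IsPrismLabelling a b) : GS a b (mixB a b γ w) = γ := by
  ext u
  simp only [mem_GS, a_mem_mixB h, b_mem_mixB h]
  grind

theorem GS_mixA_erase_b (h : IsPrismLabelling a b) :
    GS a b ((mixA a b γ w).erase (b w)) = γ := by
  by_cases hex : ∃ x ∈ γ, w < x
  · rw [mixA_erase_b_of_exists h hex, GS_mixB h]
  · rw [not_exists] at hex
    simp only [not_and, not_lt] at hex
    rw [mixA_erase_b_of_forall h hex, GS_image_a h]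

theorem mixA_inj (h : IsPrismLabelling a b) (hv : v ∈ γ) (hw : w ∈ δ)
    (e : mixA a b γ v = mixA a b δ w) : γ = δ ∧ v = w := by
  obtain rfl : γ = δ := by rw [← GS_mixA (γ := γ) (w := v) h, e, GS_mixA h]
  have hvw := ((a_mem_mixA h).1 (e ▸ (a_mem_mixA h).2 ⟨hv, le_rfl⟩)).2
  have hwv := ((a_mem_mixA h).1 (e.symm ▸ (a_mem_mixA h).2 ⟨hw, le_rfl⟩)).2
  exact ⟨rfl, le_antisymm hvw hwv⟩

theorem mixB_inj (h : IsPrismLabelling a b) (hv : v ∈ γ) (hw : w ∈ δ)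
    (e : mixB a b γ v = mixB a b δ w) : γ = δ ∧ v = w := by
  obtain rfl : γ = δ := by rw [← GS_mixB (γ := γ) (w := v) h, e, GS_mixB h]
  have hvw := ((b_mem_mixB h).1 (e.symm ▸ (b_mem_mixB h).2 ⟨hw, le_rfl⟩)).2
  have hwv := ((b_mem_mixB h).1 (e ▸ (b_mem_mixB h).2 ⟨hv, le_rfl⟩)).2
  exact ⟨rfl, le_antisymm hvw hwv⟩

theorem eq_mixB_or_eq_erase_of_subset_mixA (h : IsPrismLabelling a b) (hw : w ∈ γ)
    {s : Finset U} (hsub : s ⊆ mixA a b γ w) (hcard : s.card = γ.card) (hGS : GS a b s = γ) :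
    s = mixB a b γ w ∨ s = (mixA a b γ w).erase (b w) := by
  obtain ⟨x, hxs, hx⟩ :=
    Finset.exists_eq_insert_iff.2 ⟨hsub, by rw [hcard, card_mixA h hw]⟩
  have hs : s = (mixA a b γ w).erase x := by rw [← hx, Finset.erase_insert hxs]
  have hxA : x ∈ mixA a b γ w := hx ▸ Finset.mem_insert_self x s
  have hGSu : ∀ u ∈ γ, a u ∈ s ∨ b u ∈ s := fun u hu => mem_GS.1 (hGS ▸ hu)
  simp only [mixA, Finset.mem_union, Finset.mem_image, Finset.mem_filter] at hxA
  rcases hxA with ⟨u, ⟨hu, huw⟩, rfl⟩ | ⟨u, ⟨hu, hwu⟩, rfl⟩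
  · obtain rfl : u = w := huw.antisymm
      ((b_mem_mixA h).1 (hsub ((hGSu u hu).resolve_left hxs))).2
    exact Or.inl (hs.trans (mixA_erase_a h))
  · obtain rfl : u = w := (((a_mem_mixA h).1 (hsub ((hGSu u hu).resolve_right hxs))).2).antisymm hwu
    exact Or.inr hs

end PrismCells

namespace ExtTraj

variable {W : Set (Finset U × Finset U)}

def LiesOver [Fintype V] [DecidableEq U] (a b : V → U) (γ : Finset V) (P : ExtTraj W) : Prop :=
  (∀ i ≤ P.k, GS a b (P.t i) = γ) ∧ ∀ i, 1 ≤ i → i ≤ P.k + 1 → GS a b (P.s i) = γ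

/-- The extended trajectory `t 0, s 0, t 1, …, s (k - 1), t k, s k`: note the shift `σᵢ = s (i - 1)`
against the indexing of `ExtTraj`. -/
def ofFun (k : ℕ) (t s : ℕ → Finset U)
    (dim_t : ∀ i ≤ k, (t i).card = (t 0).card)
    (dim_s : ∀ j ≤ k, (s j).card + 1 = (t 0).card)
    (mem : ∀ j < k, (s j, t (j + 1)) ∈ W)
    (sub : ∀ j ≤ k, s j ⊆ t j)
    (nmem : ∀ j ≤ k, (s j, t j) ∉ W) : ExtTraj W where
  k := k
  t i := if i ≤ k then t i else ∅
  s i := if 1 ≤ i ∧ i ≤ k + 1 then s (i - 1) else ∅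
  dim_t i hi := by simp [hi, dim_t i hi]
  dim_s i h₁ h₂ := by simp [h₁, h₂, dim_s (i - 1) (by omega)]
  mem i h₁ h₂ := by
    obtain ⟨j, rfl⟩ := Nat.exists_eq_add_of_le' h₁
    simpa [h₂, show j + 1 ≤ k + 1 by omega] using mem j (by omega)
  sub i h₁ h₂ := by simpa [h₁, h₂, show i - 1 ≤ k by omega] using sub (i - 1) (by omega)
  nmem i h₁ h₂ := by simpa [h₁, h₂, show i - 1 ≤ k by omega] using nmem (i - 1) (by omega)
  pad_t i hi := by simp [Nat.not_le.2 hi]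
  pad_s i hi := by simp only [ite_eq_right_iff]; omega

variable {k : ℕ} {t s : ℕ → Finset U} {dim_t dim_s mem sub nmem}

@[simp] theorem ofFun_k : (ofFun (W := W) k t s dim_t dim_s mem sub nmem).k = k := rfl

theorem ofFun_t {i : ℕ} (hi : i ≤ k) :
    (ofFun (W := W) k t s dim_t dim_s mem sub nmem).t i = t i :=
  if_pos hi

theorem ofFun_s {j : ℕ} (hj : j ≤ k) :
    (ofFun (W := W) k t s dim_t dim_s mem sub nmem).s (j + 1) = s j :=
  if_pos ⟨by omega, by omega⟩

theorem eq_ofFun {P : ExtTraj W} (hk : P.k = k) (ht : ∀ i ≤ k, P.t i = t i)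
    (hs : ∀ j ≤ k, P.s (j + 1) = s j) : P = ofFun k t s dim_t dim_s mem sub nmem := by
  cases P with
  | mk k' t' s' _ _ _ _ _ pad_t pad_s =>
    obtain rfl : k' = k := hk
    simp only [ofFun, mk.injEq, true_and]
    constructor
    · funext i
      split_ifs with hi
      · exact ht i hi
      · exact pad_t i (by omega)
    · funext i
      split_ifs with hi
      · obtain ⟨j, rfl⟩ := Nat.exists_eq_add_of_le' hi.1
        exact hs j (by omega)
      · exact pad_s i (by omega)

theorem liesOver_ofFun [Fintype V] [DecidableEq U] {a b : V → U} {γ : Finset V}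
    (ht : ∀ i ≤ k, GS a b (t i) = γ) (hs : ∀ j ≤ k, GS a b (s j) = γ) :
    (ofFun (W := W) k t s dim_t dim_s mem sub nmem).LiesOver a b γ := by
  refine ⟨fun i (hi : i ≤ k) => by rw [ofFun_t hi, ht i hi], fun i h₁ (h₂ : i ≤ k + 1) => ?_⟩
  obtain ⟨j, rfl⟩ := Nat.exists_eq_add_of_le' h₁
  rw [ofFun_s (by omega), hs j (by omega)]

end ExtTraj

namespace ExtTraj.LiesOver

variable [Fintype V] [LinearOrder V] [DecidableEq U] {a b : V → U}
  {W : Set (Finset U × Finset U)} {γ : Finset V} {vm w : V} {P : ExtTraj W} {i : ℕ}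

theorem s_succ_eq_mixB_or_eq_erase (hP : P.LiesOver a b γ) (h : IsPrismLabelling a b)
    (hP0 : (P.t 0).card = γ.card + 1) (hi : i ≤ P.k) (hw : w ∈ γ)
    (ht : P.t i = mixA a b γ w) :
    P.s (i + 1) = mixB a b γ w ∨ P.s (i + 1) = (mixA a b γ w).erase (b w) := by
  have hsub := P.sub (i + 1) (by omega) (by omega)
  have hdim := P.dim_s (i + 1) (by omega) (by omega)
  rw [Nat.add_sub_cancel, ht] at hsub
  exact eq_mixB_or_eq_erase_of_subset_mixA h hw hsub (by omega) (hP.2 _ (by omega) (by omega))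

theorem le_of_s_eq_image_a (hP : P.LiesOver a b γ) (h : IsPrismLabelling a b)
    (hP0 : (P.t 0).card = γ.card + 1) (hw : w ∈ γ) (ht : P.t P.k = mixA a b γ w)
    (hs : P.s (P.k + 1) = γ.image a) {x : V} (hx : x ∈ γ) : x ≤ w := by
  by_contra! hlt
  rcases hP.s_succ_eq_mixB_or_eq_erase h hP0 le_rfl hw ht with e | e
  · exact mixB_ne_image_a h hw (e.symm.trans hs)
  · rw [mixA_erase_b_of_exists h ⟨x, hx, hlt⟩] at e
    exact mixB_ne_image_a h (nextAbove_mem hw) (e.symm.trans hs)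

theorem eq_of_s_eq_image_b (hP : P.LiesOver a b γ) (h : IsPrismLabelling a b)
    (hP0 : (P.t 0).card = γ.card + 1) (hvm : isMin γ vm) (hw : w ∈ γ)
    (ht : P.t P.k = mixA a b γ w) (hs : P.s (P.k + 1) = γ.image b) : w = vm := by
  rcases hP.s_succ_eq_mixB_or_eq_erase h hP0 le_rfl hw ht with e | e
  · by_contra hne
    exact mixB_ne_image_b h hvm.1 ((hvm.2 w hw).lt_of_ne' hne) (e.symm.trans hs)
  · have haw : a w ∈ (mixA a b γ w).erase (b w) :=
      Finset.mem_erase.2 ⟨h.ne w w, (a_mem_mixA h).2 ⟨hw, le_rfl⟩⟩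
    exact absurd (hs ▸ e ▸ haw) (a_notMem_image_b h)

end ExtTraj.LiesOver

section BlockPairing

variable [Fintype V] [LinearOrder V] [DecidableEq U] {a b : V → U}
  {W : Set (Finset U × Finset U)} {γ : Finset V} {vm v w u : V} {π : V → V}

/-- For `u ≠ vm` (`vm` the minimum of `γ`), `W` pairs `mixB γ u` exactly with `mixA γ (π u)`.
The last two fields say that the copies `γ.image b = mixB γ vm` and `γ.image a` are paired only
out of the prism block over `γ`. -/
structure BlockPairing (a b : V → U) (W : Set (Finset U × Finset U)) (γ : Finset V) (vm : V)
    (π : V → V) : Prop where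
  isMin : isMin γ vm
  mem : ∀ u ∈ γ, u ≠ vm → (mixB a b γ u, mixA a b γ (π u)) ∈ W
  eq_of_fst_mem : ∀ u ∈ γ, u ≠ vm → ∀ t, (mixB a b γ u, t) ∈ W → t = mixA a b γ (π u)
  eq_of_snd_mem : ∀ u ∈ γ, u ≠ vm → ∀ s, (s, mixA a b γ (π u)) ∈ W → s = mixB a b γ u
  partner : ∀ u ∈ γ, π u = u ∨ π u = vm ∧ u = nextAbove γ vm
  card_GS_of_image_b : ∀ t, (γ.image b, t) ∈ W → (GS a b t).card = t.card
  card_GS_of_image_a : ∀ t, (γ.image a, t) ∈ W → (GS a b t).card = t.card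

namespace BlockPairing

theorem partner_eq_self_of_lt (hB : BlockPairing a b W γ vm π)
    (hfree : ∀ u ∈ γ, u ≠ vm → π u ≠ v) (hv : v ∈ γ) (hu : u ∈ γ) (hvu : v < u) : π u = u := by
  refine (hB.partner u hu).resolve_right fun ⟨hπ, hnext⟩ => ?_
  rcases (hB.isMin.2 v hv).eq_or_lt with rfl | hlt
  · exact hfree u hu hvu.ne' hπ
  · exact (hnext ▸ nextAbove_le ⟨v, hv, hlt⟩ hv hlt).not_gt hvu

theorem partner_eq_of_ne (hB : BlockPairing a b W γ vm π)
    (hfree : ∀ u ∈ γ, u ≠ vm → π u ≠ v) (hv : v ∈ γ) (hvm : v ≠ vm) :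
    π v = vm ∧ v = nextAbove γ vm :=
  (hB.partner v hv).resolve_left (hfree v hv hvm)

theorem image_b_mixA_notMem (hB : BlockPairing a b W γ vm π) (h : IsPrismLabelling a b)
    (hw : w ∈ γ) : (γ.image b, mixA a b γ w) ∉ W := fun hmem => by
  have := hB.card_GS_of_image_b _ hmem
  rw [GS_mixA h, card_mixA h hw] at this
  omega

theorem image_a_mixA_notMem (hB : BlockPairing a b W γ vm π) (h : IsPrismLabelling a b)
    (hw : w ∈ γ) : (γ.image a, mixA a b γ w) ∉ W := fun hmem => by
  have := hB.card_GS_of_image_a _ hmem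
  rw [GS_mixA h, card_mixA h hw] at this
  omega

theorem partner_ne_of_critical_or_paired (hB : BlockPairing a b W γ vm π)
    (h : IsPrismLabelling a b)
    (H : IsCritical W (mixA a b γ v) ∨
      ∃ σ, (σ, mixA a b γ v) ∈ W ∧ GS a b σ ≠ GS a b (mixA a b γ v)) :
    ∀ u ∈ γ, u ≠ vm → π u ≠ v := by
  rintro u hu hvm rfl
  rcases H with hcrit | ⟨σ, hmem, hne⟩
  · exact (hcrit _ (hB.mem u hu hvm)).2 rfl
  · rw [hB.eq_of_snd_mem u hu hvm σ hmem, GS_mixB h, GS_mixA h] at hne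
    exact hne rfl

variable {P : ExtTraj W} {i : ℕ}

theorem t_succ_eq_of_s_succ_eq_mixB (hB : BlockPairing a b W γ vm π) (hP : P.LiesOver a b γ)
    (hP0 : (P.t 0).card = γ.card + 1) (hi : i < P.k) (ht : P.t i = mixA a b γ w) (hu : u ∈ γ)
    (hs : P.s (i + 1) = mixB a b γ u) : u ≠ vm ∧ π u ≠ w ∧ P.t (i + 1) = mixA a b γ (π u) := by
  have hmem := P.mem (i + 1) (by omega) (by omega)
  rw [hs] at hmem
  have hvm : u ≠ vm := by
    rintro rfl
    rw [mixB_eq_image_b_of_isMin hB.isMin] at hmem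
    have := hB.card_GS_of_image_b _ hmem
    rw [hP.1 _ hi, P.dim_t _ hi, hP0] at this
    omega
  refine ⟨hvm, fun e => P.nmem (i + 1) (by omega) (by omega) ?_, hB.eq_of_fst_mem u hu hvm _ hmem⟩
  simpa [hs, ht, e] using hB.mem u hu hvm

theorem exists_gt_of_s_succ_eq_erase (hB : BlockPairing a b W γ vm π) (h : IsPrismLabelling a b)
    (hP : P.LiesOver a b γ) (hP0 : (P.t 0).card = γ.card + 1) (hi : i < P.k)
    (hs : P.s (i + 1) = (mixA a b γ w).erase (b w)) : ∃ x ∈ γ, w < x := by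
  by_contra! hmax
  have hmem := P.mem (i + 1) (by omega) (by omega)
  rw [hs, mixA_erase_b_of_forall h hmax] at hmem
  have := hB.card_GS_of_image_a _ hmem
  rw [hP.1 _ hi, P.dim_t _ hi, hP0] at this
  omega

theorem k_le_of_t_eq_mixA_min (hB : BlockPairing a b W γ vm π) (h : IsPrismLabelling a b)
    (hP : P.LiesOver a b γ) (hP0 : (P.t 0).card = γ.card + 1) (hv : v ∈ γ) (hπv : π v = vm)
    (hvm : v ≠ vm) (ht : P.t i = mixA a b γ vm) : P.k ≤ i := by
  by_contra! hi
  have hnext : v = nextAbove γ vm := ((hB.partner v hv).resolve_left fun e => hvm (e ▸ hπv)).2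
  rcases hP.s_succ_eq_mixB_or_eq_erase h hP0 hi.le hB.isMin.1 ht with hs | hs
  · exact (hB.t_succ_eq_of_s_succ_eq_mixB hP hP0 hi ht hB.isMin.1 hs).1 rfl
  · rw [mixA_erase_b_of_exists h (hB.exists_gt_of_s_succ_eq_erase h hP hP0 hi hs), ← hnext] at hs
    exact (hB.t_succ_eq_of_s_succ_eq_mixB hP hP0 hi ht hv hs).2.1 hπv

theorem ascending_succ (hB : BlockPairing a b W γ vm π) (h : IsPrismLabelling a b)
    (hP : P.LiesOver a b γ) (hP0 : (P.t 0).card = γ.card + 1) (hv : v ∈ γ)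
    (hfix : ∀ u ∈ γ, v < u → π u = u) (hi : i < P.k) (him : i ≤ (γ.filter (v < ·)).card)
    (ht : P.t i = mixA a b γ ((nextAbove γ)^[i] v)) (hleft : i = 0 → P.s 1 ≠ mixB a b γ v) :
    i < (γ.filter (v < ·)).card ∧
      P.s (i + 1) = (mixA a b γ ((nextAbove γ)^[i] v)).erase (b ((nextAbove γ)^[i] v)) ∧
      P.t (i + 1) = mixA a b γ ((nextAbove γ)^[i + 1] v) := by
  have hpi := iterate_nextAbove_mem hv i
  rcases hP.s_succ_eq_mixB_or_eq_erase h hP0 hi.le hpi ht with hs | hs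
  · rcases Nat.eq_zero_or_pos i with rfl | hpos
    · exact absurd hs (hleft rfl)
    · exact absurd (hfix _ hpi (lt_iterate_nextAbove hpos him))
        (hB.t_succ_eq_of_s_succ_eq_mixB hP hP0 hi ht hpi hs).2.1
  · obtain ⟨x, hx, hxi⟩ := hB.exists_gt_of_s_succ_eq_erase h hP hP0 hi hs
    have hlt : i < (γ.filter (v < ·)).card := him.lt_of_ne fun e =>
      (le_iterate_nextAbove_card hx).not_gt (e ▸ hxi)
    refine ⟨hlt, hs, ?_⟩
    have hpi' := iterate_nextAbove_mem hv (i + 1)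
    rw [mixA_iterate_erase_b h hlt] at hs
    have := (hB.t_succ_eq_of_s_succ_eq_mixB hP hP0 hi ht hpi' hs).2.2
    rwa [hfix _ hpi' (lt_iterate_nextAbove (by omega) hlt)] at this

theorem ascending (hB : BlockPairing a b W γ vm π) (h : IsPrismLabelling a b)
    (hP : P.LiesOver a b γ) (hv : v ∈ γ) (hfix : ∀ u ∈ γ, v < u → π u = u)
    (h0 : P.t 0 = mixA a b γ v) (hleft : 1 ≤ P.k → P.s 1 ≠ mixB a b γ v) :
    ∀ i ≤ P.k, i ≤ (γ.filter (v < ·)).card ∧ P.t i = mixA a b γ ((nextAbove γ)^[i] v)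
  | 0, _ => ⟨Nat.zero_le _, h0⟩
  | i + 1, hi => by
    obtain ⟨him, ht⟩ := hB.ascending h hP hv hfix h0 hleft i (by omega)
    obtain ⟨hlt, -, ht'⟩ := hB.ascending_succ h hP (h0 ▸ card_mixA h hv) hv hfix hi him ht
      fun _ => hleft (by omega)
    exact ⟨hlt, ht'⟩

theorem k_eq_zero_of_s_eq_image_b (hB : BlockPairing a b W γ vm π) (h : IsPrismLabelling a b)
    (hP : P.LiesOver a b γ) (hv : v ∈ γ) (hfix : ∀ u ∈ γ, v < u → π u = u)
    (h0 : P.t 0 = mixA a b γ v) (hleft : 1 ≤ P.k → P.s 1 ≠ mixB a b γ v)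
    (hs : P.s (P.k + 1) = γ.image b) : P.k = 0 := by
  by_contra hk
  obtain ⟨hkm, htk⟩ := hB.ascending h hP hv hfix h0 hleft P.k le_rfl
  have := hP.eq_of_s_eq_image_b h (h0 ▸ card_mixA h hv) hB.isMin
    (iterate_nextAbove_mem hv _) htk hs
  exact (lt_iterate_nextAbove (by omega) hkm).not_ge (this ▸ hB.isMin.2 v hv)

theorem mem_of_ascending (hB : BlockPairing a b W γ vm π) (h : IsPrismLabelling a b)
    (hv : v ∈ γ) (hfix : ∀ u ∈ γ, v < u → π u = u) {j : ℕ} (hj : j < (γ.filter (v < ·)).card) :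
    ((mixA a b γ ((nextAbove γ)^[j] v)).erase (b ((nextAbove γ)^[j] v)),
      mixA a b γ ((nextAbove γ)^[j + 1] v)) ∈ W := by
  have hlt := lt_iterate_nextAbove (Nat.succ_pos j) hj
  have hp := iterate_nextAbove_mem hv (j + 1)
  have hmem := hB.mem _ hp ((hB.isMin.2 v hv).trans_lt hlt).ne'
  rwa [hfix _ hp hlt, ← mixA_iterate_erase_b h hj] at hmem

theorem notMem_of_ascending (hB : BlockPairing a b W γ vm π) (h : IsPrismLabelling a b)
    (hv : v ∈ γ) (hfix : ∀ u ∈ γ, v < u → π u = u) {j : ℕ} (hj : j ≤ (γ.filter (v < ·)).card) :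
    ((mixA a b γ ((nextAbove γ)^[j] v)).erase (b ((nextAbove γ)^[j] v)),
      mixA a b γ ((nextAbove γ)^[j] v)) ∉ W := by
  have hp := iterate_nextAbove_mem hv
  rcases hj.lt_or_eq with hj | rfl
  · rw [mixA_iterate_erase_b h hj]
    intro hmem
    have hlt := lt_iterate_nextAbove (Nat.succ_pos j) hj
    have e := hB.eq_of_fst_mem _ (hp _) ((hB.isMin.2 v hv).trans_lt hlt).ne' _ hmem
    rw [hfix _ (hp _) hlt] at e
    exact (iterate_nextAbove_lt_succ hj).ne (mixA_inj h (hp _) (hp _) e).2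
  · rw [mixA_iterate_card_erase_b h]
    exact hB.image_a_mixA_notMem h (hp _)

/-- The trajectory `mixA γ v, mixB γ v⁺, mixA γ v⁺, …, mixA γ v_top, γ.image a` through the
elements `v < v⁺ < … < v_top` of `γ` above `v`. -/
def ascendingTraj (hB : BlockPairing a b W γ vm π) (h : IsPrismLabelling a b) (hv : v ∈ γ)
    (hfix : ∀ u ∈ γ, v < u → π u = u) : ExtTraj W :=
  ExtTraj.ofFun (γ.filter (v < ·)).card (fun i => mixA a b γ ((nextAbove γ)^[i] v))
    (fun j => (mixA a b γ ((nextAbove γ)^[j] v)).erase (b ((nextAbove γ)^[j] v)))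
    (fun i _ => by
      rw [card_mixA h (iterate_nextAbove_mem hv i), card_mixA h (iterate_nextAbove_mem hv 0)])
    (fun j _ => by
      rw [card_mixA_erase_b h (iterate_nextAbove_mem hv j),
        card_mixA h (iterate_nextAbove_mem hv 0)])
    (fun _ hj => hB.mem_of_ascending h hv hfix hj) (fun _ _ => Finset.erase_subset _ _)
    (fun _ hj => hB.notMem_of_ascending h hv hfix hj)

theorem ascendingTraj_spec (hB : BlockPairing a b W γ vm π) (h : IsPrismLabelling a b)
    (hv : v ∈ γ) (hfix : ∀ u ∈ γ, v < u → π u = u) :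
    (hB.ascendingTraj h hv hfix).t 0 = mixA a b γ v ∧
      (hB.ascendingTraj h hv hfix).s ((hB.ascendingTraj h hv hfix).k + 1) = γ.image a ∧
      (hB.ascendingTraj h hv hfix).LiesOver a b γ :=
  ⟨ExtTraj.ofFun_t (Nat.zero_le _), (ExtTraj.ofFun_s le_rfl).trans (mixA_iterate_card_erase_b h),
    ExtTraj.liesOver_ofFun (fun _ _ => GS_mixA h) (fun _ _ => GS_mixA_erase_b h)⟩

theorem s_one_ne_of_s_eq_image_a (hB : BlockPairing a b W γ vm π) (h : IsPrismLabelling a b)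
    (hP : P.LiesOver a b γ) (hv : v ∈ γ) (h0 : P.t 0 = mixA a b γ v)
    (hs : P.s (P.k + 1) = γ.image a) (hk : 1 ≤ P.k) : P.s 1 ≠ mixB a b γ v := fun e => by
  have hP0 : (P.t 0).card = γ.card + 1 := h0 ▸ card_mixA h hv
  obtain ⟨hvm, hπ, ht1⟩ := hB.t_succ_eq_of_s_succ_eq_mixB hP hP0 hk h0 hv e
  have hπvm := ((hB.partner v hv).resolve_left hπ).1
  rw [hπvm, zero_add] at ht1
  have hk1 : 1 = P.k := (hB.k_le_of_t_eq_mixA_min h hP hP0 hv hπvm hvm ht1).antisymm' hk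
  rw [hk1] at ht1
  exact hvm ((hP.le_of_s_eq_image_a h hP0 hB.isMin.1 ht1 hs hv).antisymm (hB.isMin.2 v hv))

theorem eq_ascendingTraj (hB : BlockPairing a b W γ vm π) (h : IsPrismLabelling a b)
    (hv : v ∈ γ) (hfix : ∀ u ∈ γ, v < u → π u = u) (hP : P.LiesOver a b γ)
    (h0 : P.t 0 = mixA a b γ v) (hs : P.s (P.k + 1) = γ.image a) :
    P = hB.ascendingTraj h hv hfix := by
  have hP0 : (P.t 0).card = γ.card + 1 := h0 ▸ card_mixA h hv
  have hleft := hB.s_one_ne_of_s_eq_image_a h hP hv h0 hs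
  have hasc := hB.ascending h hP hv hfix h0 hleft
  obtain ⟨hkm, htk⟩ := hasc P.k le_rfl
  have hk : P.k = (γ.filter (v < ·)).card := hkm.antisymm <| not_lt.1 fun hlt => by
    obtain ⟨x, hx, hxk⟩ := exists_gt_iterate_nextAbove hlt
    exact (hP.le_of_s_eq_image_a h hP0 (iterate_nextAbove_mem hv _) htk hs hx).not_gt hxk
  refine ExtTraj.eq_ofFun hk (fun i hi => (hasc i (hk ▸ hi)).2) fun j hj => ?_
  rcases hj.lt_or_eq with hj | rfl
  · obtain ⟨hjm, htj⟩ := hasc j (by omega)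
    exact (hB.ascending_succ h hP hP0 hv hfix (by omega) hjm htj fun _ => hleft (by omega)).2.1
  · rw [← hk, hs, hk, mixA_iterate_card_erase_b h]

theorem existsUnique_image_b_of_min (hB : BlockPairing a b W γ vm π)
    (h : IsPrismLabelling a b) (hfix : ∀ u ∈ γ, vm < u → π u = u) :
    ∃! P : ExtTraj W, P.t 0 = mixA a b γ vm ∧ P.s (P.k + 1) = γ.image b ∧ P.LiesOver a b γ := by
  have hvm := hB.isMin.1
  have hmin := mixB_eq_image_b_of_isMin (a := a) (b := b) hB.isMin
  refine ⟨ExtTraj.ofFun 0 (fun _ => mixA a b γ vm) (fun _ => mixB a b γ vm)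
      (fun _ _ => rfl) (fun _ _ => by rw [card_mixB h, card_mixA h hvm])
      (fun _ hj => absurd hj (Nat.not_lt_zero _)) (fun _ _ => mixB_subset_mixA h)
      (fun _ _ => hmin ▸ hB.image_b_mixA_notMem h hvm),
    ⟨ExtTraj.ofFun_t le_rfl, (ExtTraj.ofFun_s le_rfl).trans hmin,
      ExtTraj.liesOver_ofFun (fun _ _ => GS_mixA h) (fun _ _ => GS_mixB h)⟩, ?_⟩
  rintro P ⟨h0, hs, hP⟩
  have hk := hB.k_eq_zero_of_s_eq_image_b h hP hvm hfix h0
    (fun hk e => (hB.t_succ_eq_of_s_succ_eq_mixB hP (h0 ▸ card_mixA h hvm) hk h0 hvm e).1 rfl) hs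
  refine ExtTraj.eq_ofFun hk (fun i hi => ?_) fun j hj => ?_
  · obtain rfl : i = 0 := by omega
    exact h0
  · obtain rfl : j = 0 := by omega
    rw [← hk, hs, hmin]

/-- The trajectory `mixA γ v, mixB γ v, mixA γ vm, γ.image b` along the twisted pair. -/
def twistedTraj (hB : BlockPairing a b W γ vm π) (h : IsPrismLabelling a b) (hv : v ∈ γ)
    (hvm : v ≠ vm) (hπv : π v = vm) : ExtTraj W :=
  ExtTraj.ofFun 1 (fun i => mixA a b γ (if i = 0 then v else vm))
    (fun j => mixB a b γ (if j = 0 then v else vm))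
    (fun i _ => by
      rw [card_mixA h (by split_ifs; exacts [hv, hB.isMin.1]), card_mixA h (by simpa using hv)])
    (fun j _ => by rw [card_mixB h, card_mixA h (by simpa using hv)])
    (fun j hj => by
      obtain rfl : j = 0 := by omega
      simpa [hπv] using hB.mem v hv hvm)
    (fun _ _ => mixB_subset_mixA h)
    (fun j hj => by
      obtain rfl | rfl : j = 0 ∨ j = 1 := by omega
      · simp only [if_pos]
        intro hmem'
        exact hvm (mixA_inj h hv hB.isMin.1 (hπv ▸ hB.eq_of_fst_mem v hv hvm _ hmem')).2
      · simpa [mixB_eq_image_b_of_isMin hB.isMin] using hB.image_b_mixA_notMem h hB.isMin.1)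

theorem twistedTraj_spec (hB : BlockPairing a b W γ vm π) (h : IsPrismLabelling a b)
    (hv : v ∈ γ) (hvm : v ≠ vm) (hπv : π v = vm) :
    (hB.twistedTraj h hv hvm hπv).t 0 = mixA a b γ v ∧
      (hB.twistedTraj h hv hvm hπv).s ((hB.twistedTraj h hv hvm hπv).k + 1) = γ.image b ∧
      (hB.twistedTraj h hv hvm hπv).LiesOver a b γ :=
  ⟨ExtTraj.ofFun_t (Nat.zero_le _),
    (ExtTraj.ofFun_s le_rfl).trans (mixB_eq_image_b_of_isMin hB.isMin),
    ExtTraj.liesOver_ofFun (fun _ _ => GS_mixA h) (fun _ _ => GS_mixB h)⟩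

theorem eq_twistedTraj (hB : BlockPairing a b W γ vm π) (h : IsPrismLabelling a b)
    (hv : v ∈ γ) (hvm : v ≠ vm) (hπv : π v = vm) (hfix : ∀ u ∈ γ, v < u → π u = u)
    (hP : P.LiesOver a b γ) (h0 : P.t 0 = mixA a b γ v) (hs : P.s (P.k + 1) = γ.image b) :
    P = hB.twistedTraj h hv hvm hπv := by
  have hP0 : (P.t 0).card = γ.card + 1 := h0 ▸ card_mixA h hv
  by_cases hs1 : 1 ≤ P.k ∧ P.s 1 = mixB a b γ v
  · obtain ⟨hk1, e⟩ := hs1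
    have ht1 := (hB.t_succ_eq_of_s_succ_eq_mixB hP hP0 hk1 h0 hv e).2.2
    rw [hπv] at ht1
    have hk : P.k = 1 := (hB.k_le_of_t_eq_mixA_min h hP hP0 hv hπv hvm ht1).antisymm hk1
    refine ExtTraj.eq_ofFun hk (fun i hi => ?_) fun j hj => ?_
    · obtain rfl | rfl : i = 0 ∨ i = 1 := by omega
      · simpa using h0
      · simpa using ht1
    · obtain rfl | rfl : j = 0 ∨ j = 1 := by omega
      · simpa using e
      · rw [hk] at hs
        simpa [mixB_eq_image_b_of_isMin hB.isMin] using hs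
  · have hk := hB.k_eq_zero_of_s_eq_image_b h hP hv hfix h0 (fun hk e => hs1 ⟨hk, e⟩) hs
    exact absurd (hP.eq_of_s_eq_image_b h hP0 hB.isMin hv (hk ▸ h0) hs) hvm

theorem existsUnique (hB : BlockPairing a b W γ vm π) (h : IsPrismLabelling a b) (hv : v ∈ γ)
    (hfree : ∀ u ∈ γ, u ≠ vm → π u ≠ v) {σ : Finset U}
    (hσ : σ = γ.image a ∨ σ = γ.image b) :
    ∃! P : ExtTraj W, P.t 0 = mixA a b γ v ∧ P.s (P.k + 1) = σ ∧ P.LiesOver a b γ := by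
  have hfix : ∀ u ∈ γ, v < u → π u = u := fun u => hB.partner_eq_self_of_lt hfree hv
  rcases hσ with rfl | rfl
  · exact ⟨_, hB.ascendingTraj_spec h hv hfix,
      fun P ⟨h0, hs, hP⟩ => hB.eq_ascendingTraj h hv hfix hP h0 hs⟩
  · by_cases hvm : v = vm
    · subst hvm
      exact hB.existsUnique_image_b_of_min h hfix
    · have hπv := (hB.partner_eq_of_ne hfree hv hvm).1
      exact ⟨_, hB.twistedTraj_spec h hv hvm hπv,
        fun P ⟨h0, hs, hP⟩ => hB.eq_twistedTraj h hv hvm hπv hfix hP h0 hs⟩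

end BlockPairing

end BlockPairing

theorem IsDVF.notMem_of_mem_fst {K : Set (Finset U)} {W : Set (Finset U × Finset U)}
    (hW : IsDVF K W) {σ τ ρ : Finset U} (hσ : (σ, τ) ∈ W) : (ρ, σ) ∉ W := fun hρ => by
  have hcard := (hW.1 _ hσ).2.2.2
  obtain ⟨-, rfl⟩ := Prod.mk.inj (hW.2 _ hρ _ hσ (Or.inr (Or.inr (Or.inl rfl))))
  simp at hcard

section VectorFieldsOnCopies

variable [DecidableEq U] {c : V → U} {C : Set (Finset V)} {WC : Set (Finset U × Finset U)}

theorem IsDVF.exists_eq_image_of_mem (hWC : IsDVF (copy c C) WC) {pr : Finset U × Finset U}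
    (hpr : pr ∈ WC) : ∃ δ₁ ∈ C, ∃ δ₂ ∈ C, pr = (δ₁.image c, δ₂.image c) := by
  obtain ⟨⟨δ₁, hδ₁, h₁⟩, ⟨δ₂, hδ₂, h₂⟩, -⟩ := hWC.1 pr hpr
  exact ⟨δ₁, hδ₁, δ₂, hδ₂, Prod.ext h₁ h₂⟩

theorem IsDVF.subset_and_card_of_mem (hWC : IsDVF (copy c C) WC) (hc : Function.Injective c)
    {δ₁ δ₂ : Finset V} (hpr : (δ₁.image c, δ₂.image c) ∈ WC) :
    δ₁ ⊆ δ₂ ∧ δ₂.card = δ₁.card + 1 := by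
  obtain ⟨-, -, hsub, hcard⟩ := hWC.1 _ hpr
  simp only [Finset.card_image_of_injective _ hc] at hcard
  exact ⟨(Finset.image_subset_image_iff hc).1 hsub, hcard⟩

theorem pull_image [Fintype V] (hc : Function.Injective c) (δ : Finset V) :
    pull c (δ.image c) = δ := by
  ext x
  simp [pull, hc.eq_iff]

theorem mem_of_image_mem_copy (hc : Function.Injective c) {δ : Finset V}
    (h : δ.image c ∈ copy c C) : δ ∈ C := by
  obtain ⟨δ', hδ', e⟩ := h
  rwa [Finset.image_injective hc e]

end VectorFieldsOnCopies

section Wfield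

variable [Fintype V] [LinearOrder V] [DecidableEq U] {a b c : V → U}
  {A B C : Set (Finset V)} {WA WB WC : Set (Finset U × Finset U)} {γ : Finset V} {vm u : V}

/-- The four clauses of `WprimeSet`, with each pair of `WC` written as the image of a pair of
ground simplices. -/
theorem mem_WprimeSet_cases (hc : Function.Injective c) (hWC : IsDVF (copy c C) WC)
    {p : Finset U × Finset U} (hp : p ∈ WprimeSet a b c C WC) :
    (∃ (δ₁ δ₂ : Finset V) (m : V), (δ₁.image c, δ₂.image c) ∈ WC ∧ isMin δ₁ m ∧
        p = (mixA a b δ₁ m, mixA a b δ₂ m)) ∨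
    (∃ (δ₁ δ₂ : Finset V) (vm am y : V), (δ₁.image c, δ₂.image c) ∈ WC ∧ isMin δ₂ vm ∧
        isMin δ₁ am ∧ y ∈ δ₂ ∧ y ≠ vm ∧
        p = (mixB a b δ₂ y, mixA a b δ₂ (if y = am then vm else y))) ∨
    (∃ (δ₁ δ₂ : Finset V) (am y : V), (δ₁.image c, δ₂.image c) ∈ WC ∧ isMin δ₁ am ∧ y ∈ δ₁ ∧
        y ≠ am ∧ p = (mixB a b δ₁ y, mixA a b δ₁ y)) ∨
    (∃ γ ∈ C, IsCritical WC (γ.image c) ∧ ∃ y vm : V, isMin γ vm ∧ y ∈ γ ∧ y ≠ vm ∧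
        p = (mixB a b γ y, mixA a b γ y)) := by
  simp only [WprimeSet, Set.mem_union, Set.mem_ofPred_eq] at hp
  rcases hp with ((⟨pr, hpr, m, hm, rfl⟩ | ⟨pr, hpr, y, vm, am, hvm, ham, hy, hne, rfl⟩) |
    ⟨pr, hpr, y, am, ham, hy, hne, rfl⟩) | hcrit
  · obtain ⟨δ₁, -, δ₂, -, rfl⟩ := hWC.exists_eq_image_of_mem hpr
    simp only [pull_image hc] at hm ⊢
    exact Or.inl ⟨δ₁, δ₂, m, hpr, hm, rfl⟩
  · obtain ⟨δ₁, -, δ₂, -, rfl⟩ := hWC.exists_eq_image_of_mem hpr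
    simp only [pull_image hc] at hvm ham hy ⊢
    exact Or.inr (Or.inl ⟨δ₁, δ₂, vm, am, y, hpr, hvm, ham, hy, hne, rfl⟩)
  · obtain ⟨δ₁, -, δ₂, -, rfl⟩ := hWC.exists_eq_image_of_mem hpr
    simp only [pull_image hc] at ham hy ⊢
    exact Or.inr (Or.inr (Or.inl ⟨δ₁, δ₂, am, y, hpr, ham, hy, hne, rfl⟩))
  · exact Or.inr (Or.inr (Or.inr hcrit))

/-- For `u ≠ vm`, the field `W'` pairs `mixB γ u` with `mixA γ (partnerPivot c WC γ vm u)`. -/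
def partnerPivot (c : V → U) (WC : Set (Finset U × Finset U)) (γ : Finset V) (vm u : V) : V :=
  if ∃ δ, (δ.image c, γ.image c) ∈ WC ∧ isMin δ u then vm else u

theorem partnerPivot_mem (hvm : isMin γ vm) (hu : u ∈ γ) : partnerPivot c WC γ vm u ∈ γ := by
  unfold partnerPivot
  split_ifs
  exacts [hvm.1, hu]

theorem partnerPivot_of_forall_notMem (h : ∀ δ : Finset V, (δ.image c, γ.image c) ∉ WC) :
    partnerPivot c WC γ vm u = u :=
  if_neg fun ⟨δ, hδ, _⟩ => h δ hδ

theorem partnerPivot_of_mem (hc : Function.Injective c) (hWC : IsDVF (copy c C) WC)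
    {δ : Finset V} {m : V} (hδ : (δ.image c, γ.image c) ∈ WC) (hm : isMin δ m) :
    partnerPivot c WC γ vm u = if u = m then vm else u := by
  have key : (∃ δ', (δ'.image c, γ.image c) ∈ WC ∧ isMin δ' u) ↔ u = m := by
    constructor
    · rintro ⟨δ', hδ', hu⟩
      have e := congrArg Prod.fst (hWC.2 _ hδ' _ hδ (Or.inr (Or.inr (Or.inr rfl))))
      rw [Finset.image_injective hc e] at hu
      exact hu.eq hm
    · rintro rfl
      exact ⟨δ, hδ, hm⟩
  simp only [partnerPivot, key]

theorem partnerPivot_eq_or (hc : Function.Injective c) (hWC : IsDVF (copy c C) WC)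
    (hvm : isMin γ vm) (hu : u ∈ γ) :
    partnerPivot c WC γ vm u = u ∨ partnerPivot c WC γ vm u = vm ∧ u = nextAbove γ vm := by
  by_cases hco : ∃ δ : Finset V, (δ.image c, γ.image c) ∈ WC ∧ isMin δ u
  · obtain ⟨δ, hδ, hmin⟩ := hco
    rw [partnerPivot_of_mem hc hWC hδ hmin, if_pos rfl]
    obtain ⟨hsub, hcard⟩ := hWC.subset_and_card_of_mem hc hδ
    by_cases hvmδ : vm ∈ δ
    · exact Or.inl (hmin.eq ⟨hvmδ, fun x hx => hvm.2 x (hsub hx)⟩).symm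
    · have hδe : δ = γ.erase vm := Finset.eq_of_subset_of_card_le
        (fun x hx => Finset.mem_erase.2 ⟨fun e => hvmδ (e ▸ hx), hsub hx⟩)
        (by rw [Finset.card_erase_of_mem hvm.1]; omega)
      have hlt : vm < u := (hvm.2 u hu).lt_of_ne fun e => hvmδ (e ▸ hmin.1)
      obtain ⟨hn, hvn, hle⟩ := nextAbove_spec ⟨u, hu, hlt⟩
      exact Or.inr ⟨rfl, (hmin.2 _ (hδe ▸ Finset.mem_erase.2 ⟨hvn.ne', hn⟩)).antisymm
        (hle u hu hlt)⟩
  · exact Or.inl (if_neg hco)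

theorem exists_a_mem_and_b_mem_of_mem_WprimeSet (h : IsPrismLabelling a b)
    (hc : Function.Injective c) (hWC : IsDVF (copy c C) WC) {p : Finset U × Finset U}
    (hp : p ∈ WprimeSet a b c C WC) : (∃ x, a x ∈ p.1) ∧ ∃ y, b y ∈ p.1 := by
  rcases mem_WprimeSet_cases hc hWC hp with ⟨δ₁, δ₂, m, -, hm, rfl⟩ |
    ⟨δ₁, δ₂, vm, am, y, -, hvm, -, hy, hne, rfl⟩ | ⟨δ₁, δ₂, vm, y, -, hvm, hy, hne, rfl⟩ |
    ⟨γ, -, -, y, vm, hvm, hy, hne, rfl⟩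
  · exact ⟨⟨m, (a_mem_mixA h).2 ⟨hm.1, le_rfl⟩⟩, ⟨m, (b_mem_mixA h).2 ⟨hm.1, le_rfl⟩⟩⟩
  all_goals
    obtain ⟨ha, hb⟩ := a_mem_mixB_and_b_mem_mixB h hvm hy hne
    exact ⟨⟨vm, ha⟩, ⟨y, hb⟩⟩

theorem card_GS_of_image_b_mem_Wfield (h : IsPrismLabelling a b) (hc : Function.Injective c)
    (hWA : IsDVF (copy a A) WA) (hWB : IsDVF (copy b B) WB) (hWC : IsDVF (copy c C) WC)
    (hne : γ.Nonempty) {t : Finset U} (ht : (γ.image b, t) ∈ Wfield a b c C WA WB WC) :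
    (GS a b t).card = t.card := by
  obtain ⟨x, hx⟩ := hne
  rcases ht with (hp | hp) | hp
  · exact absurd (hWA.1 _ hp).1 (notMem_copy_a h (Finset.mem_image_of_mem b hx))
  · obtain ⟨δ, -, rfl⟩ := (hWB.1 _ hp).2.1
    rw [GS_image_b h, Finset.card_image_of_injective _ h.injective_b]
  · obtain ⟨⟨y, hy⟩, -⟩ := exists_a_mem_and_b_mem_of_mem_WprimeSet h hc hWC hp
    exact absurd hy (a_notMem_image_b h)

theorem card_GS_of_image_a_mem_Wfield (h : IsPrismLabelling a b) (hc : Function.Injective c)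
    (hWA : IsDVF (copy a A) WA) (hWB : IsDVF (copy b B) WB) (hWC : IsDVF (copy c C) WC)
    (hne : γ.Nonempty) {t : Finset U} (ht : (γ.image a, t) ∈ Wfield a b c C WA WB WC) :
    (GS a b t).card = t.card := by
  obtain ⟨x, hx⟩ := hne
  rcases ht with (hp | hp) | hp
  · obtain ⟨δ, -, rfl⟩ := (hWA.1 _ hp).2.1
    rw [GS_image_a h, Finset.card_image_of_injective _ h.injective_a]
  · exact absurd (hWB.1 _ hp).1 (notMem_copy_b h (Finset.mem_image_of_mem a hx))
  · obtain ⟨-, ⟨y, hy⟩⟩ := exists_a_mem_and_b_mem_of_mem_WprimeSet h hc hWC hp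
    exact absurd hy (b_notMem_image_a h)

theorem eq_of_mixB_mem_Wfield (h : IsPrismLabelling a b) (hc : Function.Injective c)
    (hWA : IsDVF (copy a A) WA) (hWB : IsDVF (copy b B) WB) (hWC : IsDVF (copy c C) WC)
    (hvm : isMin γ vm) (hu : u ∈ γ) (hne : u ≠ vm) {t : Finset U}
    (ht : (mixB a b γ u, t) ∈ Wfield a b c C WA WB WC) :
    t = mixA a b γ (partnerPivot c WC γ vm u) := by
  obtain ⟨ha, hb⟩ := a_mem_mixB_and_b_mem_mixB h hvm hu hne
  rcases ht with (hp | hp) | hp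
  · exact absurd (hWA.1 _ hp).1 (notMem_copy_a h hb)
  · exact absurd (hWB.1 _ hp).1 (notMem_copy_b h ha)
  rcases mem_WprimeSet_cases hc hWC hp with ⟨δ₁, δ₂, m, -, hm, e⟩ |
    ⟨δ₁, δ₂, vm', am, y, hpr, hvm', ham, hy, -, e⟩ | ⟨δ₁, δ₂, am, y, hpr, -, hy, -, e⟩ |
    ⟨γ', -, hcrit, y, vm', -, hy, -, e⟩ <;>
    obtain ⟨e₁, rfl⟩ := Prod.mk.inj e
  · exact absurd e₁.symm (mixA_ne_mixB h hm.1)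
  · obtain ⟨rfl, rfl⟩ := mixB_inj h hy hu e₁.symm
    rw [partnerPivot_of_mem hc hWC hpr ham, hvm'.eq hvm]
  · obtain ⟨rfl, rfl⟩ := mixB_inj h hy hu e₁.symm
    rw [partnerPivot_of_forall_notMem fun δ => hWC.notMem_of_mem_fst hpr]
  · obtain ⟨rfl, rfl⟩ := mixB_inj h hy hu e₁.symm
    rw [partnerPivot_of_forall_notMem fun δ hδ => (hcrit _ hδ).2 rfl]

theorem eq_of_mem_Wfield_mixA_partnerPivot (h : IsPrismLabelling a b)
    (hc : Function.Injective c) (hWA : IsDVF (copy a A) WA) (hWB : IsDVF (copy b B) WB)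
    (hWC : IsDVF (copy c C) WC) (hvm : isMin γ vm) (hu : u ∈ γ) (hne : u ≠ vm)
    {s : Finset U} (hs : (s, mixA a b γ (partnerPivot c WC γ vm u)) ∈ Wfield a b c C WA WB WC) :
    s = mixB a b γ u := by
  have hw := partnerPivot_mem (c := c) (WC := WC) hvm hu
  rcases hs with (hp | hp) | hp
  · exact absurd (hWA.1 _ hp).2.1 (notMem_copy_a h ((b_mem_mixA h).2 ⟨hw, le_rfl⟩))
  · exact absurd (hWB.1 _ hp).2.1 (notMem_copy_b h ((a_mem_mixA h).2 ⟨hw, le_rfl⟩))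
  rcases mem_WprimeSet_cases hc hWC hp with ⟨δ₁, δ₂, m, hpr, hm, e⟩ |
    ⟨δ₁, δ₂, vm', am, y, hpr, hvm', ham, hy, hne', e⟩ | ⟨δ₁, δ₂, am, y, hpr, -, hy, -, e⟩ |
    ⟨γ', -, hcrit, y, vm', -, hy, -, e⟩ <;>
    obtain ⟨rfl, e₂⟩ := Prod.mk.inj e
  · obtain ⟨rfl, hmw⟩ := mixA_inj h ((hWC.subset_and_card_of_mem hc hpr).1 hm.1) hw e₂.symm
    rw [partnerPivot_of_mem hc hWC hpr hm] at hmw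
    split_ifs at hmw with hum
    · exact absurd (hum.trans hmw) hne
    · exact absurd hmw.symm hum
  · have hy' : (if y = am then vm' else y) ∈ δ₂ := by
      split_ifs
      exacts [hvm'.1, hy]
    obtain ⟨rfl, hyw⟩ := mixA_inj h hy' hw e₂.symm
    obtain rfl : vm' = vm := hvm'.eq hvm
    rw [partnerPivot_of_mem hc hWC hpr ham] at hyw
    congr 1
    split_ifs at hyw with hy₁ hu₁ hu₁
    · exact hy₁.trans hu₁.symm
    · exact absurd hyw.symm hne
    · exact absurd hyw hne'
    · exact hyw
  · obtain ⟨rfl, rfl⟩ := mixA_inj h hy hw e₂.symm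
    rw [partnerPivot_of_forall_notMem fun δ => hWC.notMem_of_mem_fst hpr]
  · obtain ⟨rfl, rfl⟩ := mixA_inj h hy hw e₂.symm
    rw [partnerPivot_of_forall_notMem fun δ hδ => (hcrit _ hδ).2 rfl]

theorem mixB_mem_Wfield (hC : ∀ δ ∈ C, δ.Nonempty) (hc : Function.Injective c)
    (hWC : IsDVF (copy c C) WC) (hγ : γ ∈ C) (hvm : isMin γ vm) (hu : u ∈ γ) (hne : u ≠ vm) :
    (mixB a b γ u, mixA a b γ (partnerPivot c WC γ vm u)) ∈ Wfield a b c C WA WB WC := by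
  refine Or.inr ?_
  simp only [WprimeSet, Set.mem_union, Set.mem_ofPred_eq]
  by_cases hco : ∃ δ : Finset V, (δ.image c, γ.image c) ∈ WC
  · obtain ⟨δ, hδ⟩ := hco
    have hδne := hC δ (mem_of_image_mem_copy hc (hWC.1 _ hδ).1)
    rw [partnerPivot_of_mem hc hWC hδ (isMin_min' hδne)]
    refine Or.inl (Or.inl (Or.inr ⟨_, hδ, u, vm, δ.min' hδne, ?_⟩))
    simpa [pull_image hc] using ⟨hvm, isMin_min' hδne, hu, hne⟩
  · push Not at hco
    rw [partnerPivot_of_forall_notMem hco]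
    by_cases hface : ∃ δ : Finset V, (γ.image c, δ.image c) ∈ WC
    · obtain ⟨δ, hδ⟩ := hface
      refine Or.inl (Or.inr ⟨_, hδ, u, vm, ?_⟩)
      simpa [pull_image hc] using ⟨hvm, hu, hne⟩
    · refine Or.inr ⟨γ, hγ, fun p hp => ?_, u, vm, hvm, hu, hne, rfl⟩
      obtain ⟨δ₁, -, δ₂, -, rfl⟩ := hWC.exists_eq_image_of_mem hp
      exact ⟨fun e => hface ⟨δ₂, e ▸ hp⟩, fun e => hco δ₁ (e ▸ hp)⟩

theorem blockPairing_Wfield (hC : ∀ δ ∈ C, δ.Nonempty) (h : IsPrismLabelling a b)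
    (hc : Function.Injective c) (hWA : IsDVF (copy a A) WA) (hWB : IsDVF (copy b B) WB)
    (hWC : IsDVF (copy c C) WC) (hγ : γ ∈ C) (hvm : isMin γ vm) :
    BlockPairing a b (Wfield a b c C WA WB WC) γ vm (partnerPivot c WC γ vm) where
  isMin := hvm
  mem _ hu hne := mixB_mem_Wfield hC hc hWC hγ hvm hu hne
  eq_of_fst_mem _ hu hne _ ht := eq_of_mixB_mem_Wfield h hc hWA hWB hWC hvm hu hne ht
  eq_of_snd_mem _ hu hne _ hs :=
    eq_of_mem_Wfield_mixA_partnerPivot h hc hWA hWB hWC hvm hu hne hs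
  partner _ hu := partnerPivot_eq_or hc hWC hvm hu
  card_GS_of_image_b _ ht := card_GS_of_image_b_mem_Wfield h hc hWA hWB hWC ⟨vm, hvm.1⟩ ht
  card_GS_of_image_a _ ht := card_GS_of_image_a_mem_Wfield h hc hWA hWB hWC ⟨vm, hvm.1⟩ ht

end Wfield

theorem exists_mixA_of_mem_prismInt [Fintype V] [LinearOrder V] [DecidableEq U] {a b : V → U}
    {C : Set (Finset V)} (h : IsPrismLabelling a b) {τ σ : Finset U} (hτ : τ ∈ prismInt a b C)
    (hσ : σ ∈ copy a C ∪ copy b C) (hcard : τ.card = σ.card + 1) (hGS : GS a b τ = GS a b σ) :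
    ∃ γ ∈ C, ∃ v ∈ γ, τ = mixA a b γ v ∧ (σ = γ.image a ∨ σ = γ.image b) := by
  obtain ⟨hτP, hτc⟩ := hτ
  simp only [prism, Set.mem_iUnion] at hτP
  obtain ⟨γ, hγ, hτS⟩ := hτP
  obtain ⟨δ, hσδ, hGSσ, hcardσ⟩ : ∃ δ, (σ = δ.image a ∨ σ = δ.image b) ∧ GS a b σ = δ ∧
      σ.card = δ.card := by
    rcases hσ with ⟨δ, -, rfl⟩ | ⟨δ, -, rfl⟩
    · exact ⟨δ, Or.inl rfl, GS_image_a h, Finset.card_image_of_injective _ h.injective_a⟩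
    · exact ⟨δ, Or.inr rfl, GS_image_b h, Finset.card_image_of_injective _ h.injective_b⟩
  rcases hτS with ⟨v, hv, rfl⟩ | ⟨v, hv, rfl⟩ | rfl
  · obtain rfl : γ = δ := (GS_mixA h).symm.trans (hGS.trans hGSσ)
    exact ⟨γ, hγ, v, hv, rfl, hσδ⟩
  · obtain rfl : γ = δ := (GS_mixB h).symm.trans (hGS.trans hGSσ)
    rw [card_mixB h] at hcard
    omega
  · exact absurd (Or.inl ⟨γ, hγ, rfl⟩) hτc

theorem unique_ground_simplex_preserving_trajectory_general
    {V : Type*} {U : Type*} [Fintype V] [LinearOrder V] [LinearOrder U]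
    (A B : Set (Finset V)) (a b c : V → U)
    (WA WB WC : Set (Finset U × Finset U))
    (hA : IsComplex A)
    (ha : StrictMono a) (hb : StrictMono b) (hc : StrictMono c)
    (hab : ∀ u v : V, a u ≠ b v)
    (hWA : IsGVF (copy a A) WA) (hWB : IsGVF (copy b B) WB)
    (hWC : IsGVF (copy c (A ∩ B)) WC)
    (τ₁ σ₂ : Finset U)
    (hτ : τ₁ ∈ prismInt a b (A ∩ B)) (hσ : σ₂ ∈ copy a (A ∩ B) ∪ copy b (A ∩ B))
    (hcard : τ₁.card = σ₂.card + 1)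
    (H1 : IsCritical (Wfield a b c (A ∩ B) WA WB WC) τ₁ ∨
      ∃ σ₁, (σ₁, τ₁) ∈ Wfield a b c (A ∩ B) WA WB WC ∧ GS a b σ₁ ≠ GS a b τ₁)
    (hGS : GS a b τ₁ = GS a b σ₂) :
    ∃! P : ExtTraj (Wfield a b c (A ∩ B) WA WB WC),
      P.t 0 = τ₁ ∧ P.s (P.k + 1) = σ₂ ∧
        (∀ i ≤ P.k, GS a b (P.t i) = GS a b τ₁) ∧
        ∀ i, 1 ≤ i → i ≤ P.k + 1 → GS a b (P.s i) = GS a b τ₁ := by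
  have h : IsPrismLabelling a b := ⟨ha.injective, hb.injective, hab⟩
  obtain ⟨γ, hγ, v, hv, rfl, hσγ⟩ := exists_mixA_of_mem_prismInt h hτ hσ hcard hGS
  have hB := blockPairing_Wfield (fun δ hδ => (hA.2 δ hδ.1).1) h hc.injective hWA.1 hWB.1 hWC.1
    hγ (isMin_min' ⟨v, hv⟩)
  rw [GS_mixA h]
  exact hB.existsUnique h hv (hB.partner_ne_of_critical_or_paired h H1) hσγ

/-- Let `τ₁` be an interior prism simplex which is `W`-critical or is
paired in `W` with a simplex of different ground simplex, and let
`σ₂ ∈ (A∩B)_Ā ∪ (A∩B)_B̄` with `GS(τ₁) = GS(σ₂)`.  Then there is exactly one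
extended `W`-trajectory from `τ₁` to `σ₂` in which every simplex has ground simplex
`GS(τ₁)`. -/
theorem unique_ground_simplex_preserving_trajectory
    {V : Type*} {U : Type*} [Fintype V] [LinearOrder V] [LinearOrder U]
    (X A B : Set (Finset V)) (a b c : V → U)
    (WA WB WC : Set (Finset U × Finset U))
    (hX : IsComplex X) (hA : IsComplex A) (hB : IsComplex B)
    (hUnion : A ∪ B = X)
    (ha : StrictMono a) (hb : StrictMono b) (hc : StrictMono c)
    (hab : ∀ u v : V, a u ≠ b v) (hac : ∀ u v : V, a u ≠ c v)
    (hbc : ∀ u v : V, b u ≠ c v)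
    (hWA : IsGVF (copy a A) WA) (hWB : IsGVF (copy b B) WB)
    (hWC : IsGVF (copy c (A ∩ B)) WC)
    (τ₁ σ₂ : Finset U)
    (hτ : τ₁ ∈ prismInt a b (A ∩ B)) (hσ : σ₂ ∈ copy a (A ∩ B) ∪ copy b (A ∩ B))
    (hcard : τ₁.card = σ₂.card + 1)
    (H1 : IsCritical (Wfield a b c (A ∩ B) WA WB WC) τ₁ ∨
      ∃ σ₁, (σ₁, τ₁) ∈ Wfield a b c (A ∩ B) WA WB WC ∧ GS a b σ₁ ≠ GS a b τ₁)
    (hGS : GS a b τ₁ = GS a b σ₂) :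
    ∃! P : ExtTraj (Wfield a b c (A ∩ B) WA WB WC),
      P.t 0 = τ₁ ∧ P.s (P.k + 1) = σ₂ ∧
        (∀ i ≤ P.k, GS a b (P.t i) = GS a b τ₁) ∧
        ∀ i, 1 ≤ i → i ≤ P.k + 1 → GS a b (P.s i) = GS a b τ₁ :=
  unique_ground_simplex_preserving_trajectory_general A B a b c WA WB WC hA ha hb hc hab hWA hWB hWC
    τ₁ σ₂ hτ hσ hcard H1 hGS

end DMT
end
end

section
/- If (σ^(q−1), τ^(q)) ∈ W' and GS(σ) ≠ GS(τ), then (GS(σ), GS(τ)) ∈ W_(A∩B)‾. Conversely, for every pair (α, β) ∈ W_(A∩B)‾ there exists exactly one pair (σ, τ) ∈ W' with GS(σ) = α and GS(τ) = β. -/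
open scoped Classical

noncomputable section

namespace DMT

variable {V : Type*} {U : Type*}

lemma GS_mixA_s16 {V : Type*} {U : Type*} [Fintype V] [LinearOrder V] [DecidableEq U]
    {a b : V → U} (hainj : Function.Injective a) (hbinj : Function.Injective b)
    (hab : ∀ u v : V, a u ≠ b v) (γ : Finset V) (v : V) :
    GS a b (mixA a b γ v) = γ := by
  ext u
  simp only [GS, mixA, Finset.mem_filter, Finset.mem_univ, true_and,
    Finset.mem_union, Finset.mem_image]
  constructor
  · rintro ((⟨w, hw, hwe⟩ | ⟨w, hw, hwe⟩) | (⟨w, hw, hwe⟩ | ⟨w, hw, hwe⟩))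
    · exact (hainj hwe) ▸ hw.1
    · exact absurd hwe (hab u w).symm
    · exact absurd hwe (hab w u)
    · exact (hbinj hwe) ▸ hw.1
  · intro hu
    rcases le_total u v with h | h
    · exact Or.inl (Or.inl ⟨u, ⟨hu, h⟩, rfl⟩)
    · exact Or.inr (Or.inr ⟨u, ⟨hu, h⟩, rfl⟩)

lemma GS_mixB_s16 {V : Type*} {U : Type*} [Fintype V] [LinearOrder V] [DecidableEq U]
    {a b : V → U} (hainj : Function.Injective a) (hbinj : Function.Injective b)
    (hab : ∀ u v : V, a u ≠ b v) (γ : Finset V) (v : V) :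
    GS a b (mixB a b γ v) = γ := by
  ext u
  simp only [GS, mixB, Finset.mem_filter, Finset.mem_univ, true_and,
    Finset.mem_union, Finset.mem_image]
  constructor
  · rintro ((⟨w, hw, hwe⟩ | ⟨w, hw, hwe⟩) | (⟨w, hw, hwe⟩ | ⟨w, hw, hwe⟩))
    · exact (hainj hwe) ▸ hw.1
    · exact absurd hwe (hab u w).symm
    · exact absurd hwe (hab w u)
    · exact (hbinj hwe) ▸ hw.1
  · intro hu
    rcases lt_or_ge u v with h | h
    · exact Or.inl (Or.inl ⟨u, ⟨hu, h⟩, rfl⟩)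
    · exact Or.inr (Or.inr ⟨u, ⟨hu, h⟩, rfl⟩)

lemma pull_image_s16 {V : Type*} {U : Type*} [Fintype V] [DecidableEq U]
    {c : V → U} (hcinj : Function.Injective c) (γ : Finset V) :
    pull c (γ.image c) = γ := by
  ext u
  simp [pull, hcinj.eq_iff]

/-- If `(σ, τ) ∈ W'` and `GS(σ) ≠ GS(τ)`, then
`(GS(σ), GS(τ)) ∈ W_(A∩B)‾`; conversely, for every pair `(α, β) ∈ W_(A∩B)‾` there is
exactly one pair `(σ, τ) ∈ W'` with `GS(σ) = α` and `GS(τ) = β`. -/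
theorem wprime_ground_simplex_pairs
    {V : Type*} {U : Type*} [Fintype V] [LinearOrder V] [LinearOrder U]
    (X A B : Set (Finset V)) (a b c : V → U)
    (WA WB WC : Set (Finset U × Finset U))
    (hX : IsComplex X) (hA : IsComplex A) (hB : IsComplex B)
    (hUnion : A ∪ B = X)
    (ha : StrictMono a) (hb : StrictMono b) (hc : StrictMono c)
    (hab : ∀ u v : V, a u ≠ b v) (hac : ∀ u v : V, a u ≠ c v)
    (hbc : ∀ u v : V, b u ≠ c v)
    (hWA : IsGVF (copy a A) WA) (hWB : IsGVF (copy b B) WB)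
    (hWC : IsGVF (copy c (A ∩ B)) WC) :
    (∀ σ τ : Finset U, (σ, τ) ∈ WprimeSet a b c (A ∩ B) WC →
        GS a b σ ≠ GS a b τ →
        ((GS a b σ).image c, (GS a b τ).image c) ∈ WC) ∧
      ∀ pr ∈ WC, ∃! st : Finset U × Finset U,
        st ∈ WprimeSet a b c (A ∩ B) WC ∧
          (GS a b st.1).image c = pr.1 ∧ (GS a b st.2).image c = pr.2 := by
  have hcinj : Function.Injective c := hc.injective
  have hGA : ∀ (γ : Finset V) (v : V), GS a b (mixA a b γ v) = γ :=
    GS_mixA_s16 ha.injective hb.injective hab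
  have hGB : ∀ (γ : Finset V) (v : V), GS a b (mixB a b γ v) = γ :=
    GS_mixB_s16 ha.injective hb.injective hab
  have key1 : ∀ pr ∈ WC, (pull c pr.1).image c = pr.1 ∧ (pull c pr.2).image c = pr.2 := by
    intro pr hpr
    obtain ⟨h1, h2, -, -⟩ := hWC.1.1 pr hpr
    obtain ⟨γ1, -, e1⟩ := h1
    obtain ⟨γ2, -, e2⟩ := h2
    exact ⟨by rw [e1, pull_image_s16 hcinj], by rw [e2, pull_image_s16 hcinj]⟩
  constructor
  · intro σ τ hmem hne
    rcases hmem with ((h | h) | h) | h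
    · obtain ⟨pr, hpr, v, hv, hp⟩ := h
      rw [Prod.ext_iff] at hp
      obtain ⟨e1, e2⟩ := hp
      simp only at e1 e2
      rw [e1, e2, hGA, hGA, (key1 pr hpr).1, (key1 pr hpr).2]
      exact hpr
    · obtain ⟨pr, hpr, v, vm, am, hvm, ham, hv, hvne, hp⟩ := h
      rw [Prod.ext_iff] at hp
      obtain ⟨e1, e2⟩ := hp
      simp only at e1 e2
      exact absurd (by rw [e1, e2, hGB, hGA]) hne
    · obtain ⟨pr, hpr, v, am, ham, hv, hvne, hp⟩ := h
      rw [Prod.ext_iff] at hp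
      obtain ⟨e1, e2⟩ := hp
      simp only at e1 e2
      exact absurd (by rw [e1, e2, hGB, hGA]) hne
    · obtain ⟨γ, hγ, hcrit, v, vm, hvm, hv, hvne, hp⟩ := h
      rw [Prod.ext_iff] at hp
      obtain ⟨e1, e2⟩ := hp
      simp only at e1 e2
      exact absurd (by rw [e1, e2, hGB, hGA]) hne
  · intro pr hpr
    obtain ⟨h1c, h2c, hsub, hcard⟩ := hWC.1.1 pr hpr
    have hne12 : pr.1 ≠ pr.2 := by
      intro h
      rw [h] at hcard
      omega
    obtain ⟨γ1, hγ1, e1⟩ := h1c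
    have hpull1 : pull c pr.1 = γ1 := by rw [e1, pull_image_s16 hcinj]
    have hne1 : (pull c pr.1).Nonempty := by
      rw [hpull1]; exact (hA.2 γ1 hγ1.1).1
    set v := (pull c pr.1).min' hne1 with hvdef
    have hvmin : isMin (pull c pr.1) v :=
      ⟨Finset.min'_mem _ _, fun u hu => Finset.min'_le _ _ hu⟩
    refine ⟨(mixA a b (pull c pr.1) v, mixA a b (pull c pr.2) v), ⟨?_, ?_, ?_⟩, ?_⟩
    · exact Or.inl (Or.inl (Or.inl ⟨pr, hpr, v, hvmin, rfl⟩))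
    · show (GS a b (mixA a b (pull c pr.1) v)).image c = pr.1
      rw [hGA]; exact (key1 pr hpr).1
    · show (GS a b (mixA a b (pull c pr.2) v)).image c = pr.2
      rw [hGA]; exact (key1 pr hpr).2
    · rintro ⟨σ, τ⟩ ⟨hmem, g1, g2⟩
      simp only at g1 g2
      rcases hmem with ((h | h) | h) | h
      · obtain ⟨pr', hpr', v', hv', hp⟩ := h
        rw [Prod.ext_iff] at hp
        obtain ⟨e1', e2'⟩ := hp
        simp only at e1' e2'
        have hGσ : GS a b σ = pull c pr'.1 := by rw [e1', hGA]
        have hGτ : GS a b τ = pull c pr'.2 := by rw [e2', hGA]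
        have q1 : pr'.1 = pr.1 := by rw [← (key1 pr' hpr').1, ← hGσ, g1]
        have q2 : pr'.2 = pr.2 := by rw [← (key1 pr' hpr').2, ← hGτ, g2]
        have hpp : pr' = pr := Prod.ext_iff.mpr ⟨q1, q2⟩
        subst hpp
        have hvv : v' = v :=
          le_antisymm (hv'.2 v hvmin.1) (hvmin.2 v' hv'.1)
        rw [Prod.ext_iff]
        exact ⟨by rw [e1', hvv], by rw [e2', hvv]⟩
      · obtain ⟨pr', hpr', v'', vm, am, hvm, ham, hv'', hne'', hp⟩ := h
        rw [Prod.ext_iff] at hp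
        obtain ⟨e1', e2'⟩ := hp
        simp only at e1' e2'
        exact absurd (by rw [← g1, ← g2, e1', e2', hGB, hGA]) hne12
      · obtain ⟨pr', hpr', v'', am, ham, hv'', hne'', hp⟩ := h
        rw [Prod.ext_iff] at hp
        obtain ⟨e1', e2'⟩ := hp
        simp only at e1' e2'
        exact absurd (by rw [← g1, ← g2, e1', e2', hGB, hGA]) hne12
      · obtain ⟨γ, hγ, hcrit, v'', vm, hvm, hv'', hne'', hp⟩ := h
        rw [Prod.ext_iff] at hp
        obtain ⟨e1', e2'⟩ := hp
        simp only at e1' e2'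
        exact absurd (by rw [← g1, ← g2, e1', e2', hGB, hGA]) hne12


end DMT
end
end

section
/- Let σ^(q−1) ⊆ τ^(q) be simplices of the prism ℙ((A∩B)‾) such that GS(σ) ≠ GS(τ) = β and τ ∈ A_β. Then GS(σ) is a facet of GS(τ), i.e., GS(σ)^(q−2) ⊆ GS(τ)^(q−1). -/
open scoped Classical

noncomputable section

namespace DMT

variable {V : Type*} {U : Type*}

lemma card_mixA_aux {V : Type*} {U : Type*} [LinearOrder V] [LinearOrder U]
    {a b : V → U} (ha : StrictMono a) (hb : StrictMono b)
    (hab : ∀ u v : V, a u ≠ b v) {γ : Finset V} {v : V} (hv : v ∈ γ) :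
    (mixA a b γ v).card = γ.card + 1 := by
  classical
  set S := γ.filter fun u => u ≤ v with hS
  set T := γ.filter fun u => v ≤ u with hT
  have hdisj : Disjoint (S.image a) (T.image b) := by
    rw [Finset.disjoint_left]
    rintro x hx hx'
    obtain ⟨u, _, rfl⟩ := Finset.mem_image.mp hx
    obtain ⟨w, _, hw⟩ := Finset.mem_image.mp hx'
    exact hab u w hw.symm
  have h1 : (mixA a b γ v).card = S.card + T.card := by
    rw [mixA, Finset.card_union_of_disjoint hdisj,
      Finset.card_image_of_injective _ ha.injective,
      Finset.card_image_of_injective _ hb.injective]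
  have hU : S ∪ T = γ := by
    ext u
    simp only [hS, hT, Finset.mem_union, Finset.mem_filter]
    rcases le_total u v with h | h <;> tauto
  have hI : S ∩ T = {v} := by
    ext u
    simp only [hS, hT, Finset.mem_inter, Finset.mem_filter, Finset.mem_singleton]
    constructor
    · rintro ⟨⟨_, h1⟩, ⟨_, h2⟩⟩; exact le_antisymm h1 h2
    · rintro rfl; exact ⟨⟨hv, le_refl _⟩, ⟨hv, le_refl _⟩⟩
  have := Finset.card_union_add_card_inter S T
  rw [hU, hI, Finset.card_singleton] at this
  omega

lemma card_mixB_aux {V : Type*} {U : Type*} [LinearOrder V] [LinearOrder U]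
    {a b : V → U} (ha : StrictMono a) (hb : StrictMono b)
    (hab : ∀ u v : V, a u ≠ b v) (γ : Finset V) (v : V) :
    (mixB a b γ v).card = γ.card := by
  classical
  set S := γ.filter fun u => u < v with hS
  set T := γ.filter fun u => v ≤ u with hT
  have hdisj : Disjoint (S.image a) (T.image b) := by
    rw [Finset.disjoint_left]
    rintro x hx hx'
    obtain ⟨u, _, rfl⟩ := Finset.mem_image.mp hx
    obtain ⟨w, _, hw⟩ := Finset.mem_image.mp hx'
    exact hab u w hw.symm
  have h1 : (mixB a b γ v).card = S.card + T.card := by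
    rw [mixB, Finset.card_union_of_disjoint hdisj,
      Finset.card_image_of_injective _ ha.injective,
      Finset.card_image_of_injective _ hb.injective]
  have hU : S ∪ T = γ := by
    ext u
    simp only [hS, hT, Finset.mem_union, Finset.mem_filter]
    rcases lt_or_ge u v with h | h <;> tauto
  have hI : S ∩ T = ∅ := by
    ext u
    simp only [hS, hT, Finset.mem_inter, Finset.mem_filter, Finset.notMem_empty,
      iff_false]
    rintro ⟨⟨_, h1⟩, ⟨_, h2⟩⟩; exact absurd h2 (not_le.mpr h1)
  have := Finset.card_union_add_card_inter S T
  rw [hU, hI, Finset.card_empty] at this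
  omega

lemma mem_of_mem_mixA {V : Type*} {U : Type*} [LinearOrder V] [LinearOrder U]
    {a b : V → U} (ha : StrictMono a) (hb : StrictMono b)
    (hab : ∀ u v : V, a u ≠ b v) {γ : Finset V} {v : V} {w : V}
    (h : a w ∈ mixA a b γ v ∨ b w ∈ mixA a b γ v) : w ∈ γ := by
  classical
  rcases h with h | h <;>
    rcases Finset.mem_union.mp h with h' | h' <;>
    obtain ⟨u, hu, hu'⟩ := Finset.mem_image.mp h'
  · exact ha.injective hu'.symm ▸ (Finset.mem_filter.mp hu).1
  · exact absurd hu' (hab w u).symm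
  · exact absurd hu' (hab u w)
  · exact hb.injective hu'.symm ▸ (Finset.mem_filter.mp hu).1

/-- If `σ ⊆ τ` are prism simplices with `τ` a cofacet of `σ`,
`τ ∈ A_β`, and the ground simplex `α` of `σ` differs from `β`, then `α` is a facet of
`β`. -/
theorem ground_simplex_facet
    {V : Type*} {U : Type*} [Fintype V] [LinearOrder V] [LinearOrder U]
    (X A B : Set (Finset V)) (a b : V → U)
    (hX : IsComplex X) (hA : IsComplex A) (hB : IsComplex B)
    (hUnion : A ∪ B = X)
    (ha : StrictMono a) (hb : StrictMono b)
    (hab : ∀ u v : V, a u ≠ b v) :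
    ∀ α β : Finset V, α ∈ A ∩ B → β ∈ A ∩ B →
      ∀ σ τ : Finset U, σ ∈ SsetOf a b α → τ ∈ AsetOf a b β → α ≠ β →
        σ ⊆ τ → τ.card = σ.card + 1 →
        α ⊆ β ∧ β.card = α.card + 1 := by
  intro α β hα hβ σ τ hσ hτ hne hsub hcard
  obtain ⟨v, hv, rfl⟩ := hτ
  -- α ⊆ β
  have hsubαβ : α ⊆ β := by
    intro w hw
    have key : a w ∈ mixA a b β v ∨ b w ∈ mixA a b β v := by
      rcases hσ with ⟨u, hu, rfl⟩ | (⟨u, hu, rfl⟩ | hs)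
      · rcases le_total w u with hwu | hwu
        · exact Or.inl (hsub (Finset.mem_union_left _
            (Finset.mem_image_of_mem a (Finset.mem_filter.mpr ⟨hw, hwu⟩))))
        · exact Or.inr (hsub (Finset.mem_union_right _
            (Finset.mem_image_of_mem b (Finset.mem_filter.mpr ⟨hw, hwu⟩))))
      · rcases lt_or_ge w u with hwu | hwu
        · exact Or.inl (hsub (Finset.mem_union_left _
            (Finset.mem_image_of_mem a (Finset.mem_filter.mpr ⟨hw, hwu⟩))))
        · exact Or.inr (hsub (Finset.mem_union_right _
            (Finset.mem_image_of_mem b (Finset.mem_filter.mpr ⟨hw, hwu⟩))))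
      · have : σ = α.image a := hs
        subst this
        exact Or.inl (hsub (Finset.mem_image_of_mem a hw))
    exact mem_of_mem_mixA ha hb hab key
  refine ⟨hsubαβ, ?_⟩
  have hτcard : (mixA a b β v).card = β.card + 1 := card_mixA_aux ha hb hab hv
  -- rule out the non-mixA cases
  rcases hσ with ⟨u, hu, rfl⟩ | (⟨u, hu, rfl⟩ | hs)
  · have := card_mixA_aux ha hb hab hu
    omega
  · have := card_mixB_aux ha hb hab α u
    have hle : β.card ≤ α.card := by omega
    exact absurd (Finset.eq_of_subset_of_card_le hsubαβ hle) hne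
  · have hs' : σ = α.image a := hs
    have : σ.card = α.card := by
      rw [hs', Finset.card_image_of_injective _ ha.injective]
    have hle : β.card ≤ α.card := by omega
    exact absurd (Finset.eq_of_subset_of_card_le hsubαβ hle) hne

end DMT
end
end
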